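/- arXiv:1103.0868 — 7 statements merged into one kernel-verified Lean document; each statement's English description precedes it below -/
import Mathlib

section
/- Let χ be a weighted game on n voters with exactly two types of voters and exactly one type of shift-minimal winning coalition (r = 1). Then χ admits a minimum integer representation. -/
def SimpleGame (n : ℕ) (χ : Finset (Fin n) → Prop) : Prop :=
  (∀ U V : Finset (Fin n), U ⊆ V → χ U → χ V) ∧ ¬ χ (∅ : Finset (Fin n)) ∧ χ Finset.univ

def IsRep {n : ℕ} (χ : Finset (Fin n) → Prop) (q : ℕ) (w : Fin n → ℕ) : Prop :=
  ∀ U : Finset (Fin n), χ U ↔ q ≤ ∑ i ∈ U, w i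

def IsWeighted {n : ℕ} (χ : Finset (Fin n) → Prop) : Prop :=
  ∃ q w, IsRep χ q w

def MinRep {n : ℕ} (χ : Finset (Fin n) → Prop) (q : ℕ) (w : Fin n → ℕ) : Prop :=
  IsRep χ q w ∧ ∀ q' w', IsRep χ q' w' → ∀ i, w i ≤ w' i

def Desir {n : ℕ} (χ : Finset (Fin n) → Prop) (i j : Fin n) : Prop :=
  ∀ U : Finset (Fin n), j ∈ U → i ∉ U → χ U → χ (insert i (U.erase j))

def VEquiv {n : ℕ} (χ : Finset (Fin n) → Prop) (i j : Fin n) : Prop :=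
  Desir χ i j ∧ Desir χ j i

def StrictDesir {n : ℕ} (χ : Finset (Fin n) → Prop) (i j : Fin n) : Prop :=
  Desir χ i j ∧ ¬ Desir χ j i

def NullVoter {n : ℕ} (χ : Finset (Fin n) → Prop) (i : Fin n) : Prop :=
  ∀ U : Finset (Fin n), χ (insert i U) ↔ χ U

def ShiftMinWin {n : ℕ} (χ : Finset (Fin n) → Prop) (U : Finset (Fin n)) : Prop :=
  χ U ∧ (∀ i ∈ U, ¬ χ (U.erase i)) ∧
    ∀ i ∈ U, ∀ j, j ∉ U → StrictDesir χ i j → ¬ χ (insert j (U.erase i))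

def ShiftMaxLose {n : ℕ} (χ : Finset (Fin n) → Prop) (U : Finset (Fin n)) : Prop :=
  ¬ χ U ∧ (∀ j, j ∉ U → χ (insert j U)) ∧
    ∀ j ∈ U, ∀ i, i ∉ U → StrictDesir χ i j → χ (insert i (U.erase j))

def TwoTypes {n : ℕ} (χ : Finset (Fin n) → Prop) (N1 N2 : Finset (Fin n)) : Prop :=
  N1.Nonempty ∧ N2.Nonempty ∧ Disjoint N1 N2 ∧ N1 ∪ N2 = Finset.univ ∧
  (∀ i ∈ N1, ∀ j ∈ N1, VEquiv χ i j) ∧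
  (∀ i ∈ N2, ∀ j ∈ N2, VEquiv χ i j) ∧
  (∀ i ∈ N1, ∀ j ∈ N2, StrictDesir χ i j)

noncomputable def NumWinTypes2 {n : ℕ} (χ : Finset (Fin n) → Prop) (N1 N2 : Finset (Fin n)) : ℕ :=
  Set.ncard {p : ℕ × ℕ | ∃ U, ShiftMinWin χ U ∧ p = ((U ∩ N1).card, (U ∩ N2).card)}

def LPFeasible {n : ℕ} (χ : Finset (Fin n) → Prop) (N1 N2 : Finset (Fin n))
    (w1 w2 q : ℝ) : Prop :=
  0 ≤ w1 ∧ 0 ≤ w2 ∧ 0 ≤ q ∧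
  (∀ U, ShiftMinWin χ U → q ≤ ((U ∩ N1).card : ℝ) * w1 + ((U ∩ N2).card : ℝ) * w2) ∧
  (∀ U, ShiftMaxLose χ U → ((U ∩ N1).card : ℝ) * w1 + ((U ∩ N2).card : ℝ) * w2 ≤ q - 1)

def GameIso (n : ℕ) (χ χ' : Finset (Fin n) → Prop) : Prop :=
  ∃ σ : Equiv.Perm (Fin n), ∀ U : Finset (Fin n), χ' U ↔ χ (U.image σ)

noncomputable def NumTypes (n : ℕ) (χ : Finset (Fin n) → Prop) : ℕ :=
  Set.ncard {S : Set (Fin n) | ∃ i, S = {j | VEquiv χ i j}}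

noncomputable def ClassCount (n : ℕ) (χ : Finset (Fin n) → Prop) (U : Finset (Fin n)) (i : Fin n) : ℕ :=
  Set.ncard {j : Fin n | j ∈ U ∧ VEquiv χ i j}

def SameType (n : ℕ) (χ : Finset (Fin n) → Prop) (U V : Finset (Fin n)) : Prop :=
  ∀ i, ClassCount n χ U i = ClassCount n χ V i

noncomputable def NumSMWTypes (n : ℕ) (χ : Finset (Fin n) → Prop) : ℕ :=
  Set.ncard {T : Set (Finset (Fin n)) | ∃ U, ShiftMinWin χ U ∧
    T = {V | ShiftMinWin χ V ∧ SameType n χ U V}}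

noncomputable def wmntr (n t r : ℕ) : ℕ :=
  Set.ncard {C : Set (Finset (Fin n) → Prop) | ∃ χ, SimpleGame n χ ∧ IsWeighted χ ∧
    NumTypes n χ = t ∧ NumSMWTypes n χ = r ∧ C = {χ' | GameIso n χ χ'}}

noncomputable def wmnt (n t : ℕ) : ℕ :=
  Set.ncard {C : Set (Finset (Fin n) → Prop) | ∃ χ, SimpleGame n χ ∧ IsWeighted χ ∧
    NumTypes n χ = t ∧ C = {χ' | GameIso n χ χ'}}

def PreservesTypes {n : ℕ} (χ : Finset (Fin n) → Prop) (w : Fin n → ℕ) : Prop :=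
  ∀ i j, VEquiv χ i j → w i = w j

def MinRepPT {n : ℕ} (χ : Finset (Fin n) → Prop) (q : ℕ) (w : Fin n → ℕ) : Prop :=
  IsRep χ q w ∧ PreservesTypes χ w ∧
    ∀ q' w', IsRep χ q' w' → PreservesTypes χ w' → ∀ i, w i ≤ w' i

def Repre (a b k : ℕ) : Prop := ∃ u v : ℕ, u * a + v * b = k

def Wvec (t a b : ℕ) (l : Fin t → ℕ) (k : Fin t) : Fin (t + b + a) → ℕ :=
  fun i => if h : (i : ℕ) < t then
      (a * b - l ⟨(i : ℕ), h⟩ - 1) + (if (i : ℕ) = (k : ℕ) then 0 else 1)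
    else if (i : ℕ) < t + b then a else b

/-!
Exchanging two voters of the same class, or a voter of `N2` for one of `N1`, never turns a
winning coalition into a losing one, while every winning coalition shrinks to a shift-minimal
one by deleting voters and exchanging voters of `N1` for voters of `N2`. So if `(a, b)` is the
only type of shift-minimal winning coalitions, a coalition with `x` voters of `N1` and `y` of
`N2` wins iff `a ≤ x` and `a + b ≤ x + y`.

Comparing winning and losing coalitions of suitable types, every integer representation gives
each voter of `N2` weight at least `w₂ = min (|N1| - a + 1) b` and each voter of `N1` weight
larger than `(|N2| - b) w₂`. The same comparisons show that a representation can only exist if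
`min (|N1| - a) (b - 1) = 0` or `|N2| = b + 1`, and in both cases these lower bounds, that is
`w₂` and `w₁ = (|N2| - b) w₂ + 1` with quota `a w₁ + b w₂`, represent the game themselves.
-/

open Finset

lemma Finset.card_insert_erase_of_mem_of_notMem {α : Type*} [DecidableEq α] {i j : α}
    {s : Finset α} (hj : j ∈ s) (hi : i ∉ s) : #(insert i (s.erase j)) = #s := by
  rw [card_insert_of_notMem (fun h => hi (mem_of_mem_erase h)), card_erase_add_one hj]

lemma Finset.card_insert_erase_inter_add_one {α : Type*} [DecidableEq α] {i j : α}
    {s t : Finset α} (his : i ∈ s) (hit : i ∈ t) (hjt : j ∉ t) :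
    #(insert j (s.erase i) ∩ t) + 1 = #(s ∩ t) := by
  rw [insert_inter_of_notMem hjt, erase_inter, card_erase_add_one (mem_inter.2 ⟨his, hit⟩)]

lemma Finset.card_inter_add_card_inter_compl {α : Type*} [Fintype α] [DecidableEq α]
    (s t : Finset α) : #(s ∩ t) + #(s ∩ tᶜ) = #s := by
  rw [← sdiff_eq_inter_compl, card_inter_add_card_sdiff]

lemma Finset.sum_add_card_mul_le_sum {ι : Type*} {C E : Finset ι} {f : ι → ℕ} {d : ℕ}
    (hCE : #E = #C) (h : ∀ c ∈ C, ∀ m ∈ E, f m + d ≤ f c) :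
    ∑ m ∈ E, f m + #C * d ≤ ∑ c ∈ C, f c := by
  rcases E.eq_empty_or_nonempty with rfl | hE
  · simp [← hCE]
  obtain ⟨M, hM, hmax⟩ := E.exists_max_image f hE
  have hE : ∑ m ∈ E, f m ≤ #C * f M := by
    simpa [hCE] using sum_le_card_nsmul E f (f M) hmax
  have hC : #C * (f M + d) ≤ ∑ c ∈ C, f c := by
    simpa using card_nsmul_le_sum C f (f M + d) fun c hc => h c hc M hM
  nlinarith

lemma le_and_add_le_iff_mul_add_mul_le {a b n1 n2 x y W1 W2 : ℕ}
    (hW2 : W2 = min (n1 - a + 1) b) (hW1 : W1 = (n2 - b) * W2 + 1) (hb : b < n2)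
    (hab : min (n1 - a) (b - 1) = 0 ∨ n2 ≤ b + 1) (hx : x ≤ n1) (hy : y ≤ n2) :
    a ≤ x ∧ a + b ≤ x + y ↔ a * W1 + b * W2 ≤ x * W1 + y * W2 := by
  obtain ⟨t, rfl⟩ : ∃ t, n2 = b + 1 + t := ⟨n2 - b - 1, by omega⟩
  rw [show b + 1 + t - b = t + 1 by omega] at hW1
  constructor
  · rintro ⟨hax, haby⟩
    obtain ⟨u, rfl⟩ := Nat.exists_eq_add_of_le hax
    have h1 := Nat.mul_le_mul_right W2 (show b ≤ u + y by omega)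
    have h2 := Nat.mul_le_mul_left u (show W2 ≤ W1 by rw [hW1]; nlinarith)
    nlinarith
  · intro h
    by_contra! hlose
    by_cases hax : a ≤ x
    · obtain ⟨u, rfl⟩ := Nat.exists_eq_add_of_le hax
      have h1 := Nat.mul_le_mul_right W2 (show u + y + 1 ≤ b by omega)
      rcases hab with h0 | h0
      · obtain rfl : u = 0 := by omega
        have : 1 ≤ W2 := by omega
        nlinarith
      · obtain rfl : t = 0 := by omega
        have : u < W2 := by omega
        nlinarith
    · have h1 := Nat.mul_le_mul_right W1 (show x + 1 ≤ a by omega)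
      have h2 := Nat.mul_le_mul_right W2 hy
      nlinarith

section

variable {n : ℕ} {χ : Finset (Fin n) → Prop} {N1 N2 : Finset (Fin n)}

lemma win_of_card_le (hmono : ∀ U V : Finset (Fin n), U ⊆ V → χ U → χ V)
    (hN1 : ∀ i ∈ N1, ∀ j ∈ N1, Desir χ i j) (hN1c : ∀ i, ∀ j ∉ N1, Desir χ i j)
    {U V : Finset (Fin n)} (hU : χ U) (hUV1 : #(U ∩ N1) ≤ #(V ∩ N1)) (hUV : #U ≤ #V) :
    χ V := by
  induction hm : #(U \ V) generalizing U with
  | zero => exact hmono U V (sdiff_eq_empty_iff_subset.1 (card_eq_zero.1 hm)) hU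
  | succ m ih =>
    suffices ∃ j ∈ U \ V, ∃ i ∈ V \ U,
        Desir χ i j ∧ #(insert i (U.erase j) ∩ N1) ≤ #(V ∩ N1) by
      obtain ⟨j, hj, i, hi, hij, hcard⟩ := this
      rw [mem_sdiff] at hi hj
      refine ih (hij U hj.1 hi.2 hU) hcard
        (by rwa [card_insert_erase_of_mem_of_notMem hj.1 hi.2]) ?_
      rw [insert_sdiff_of_mem _ hi.1, erase_sdiff_comm, card_erase_of_mem (mem_sdiff.2 hj), hm,
        Nat.add_sub_cancel]
    by_cases hU1 : ∃ j ∈ U \ V, j ∈ N1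
    · obtain ⟨j, hj, hjN1⟩ := hU1
      obtain ⟨i, hi, hiU⟩ : ∃ i ∈ V ∩ N1, i ∉ U ∩ N1 := by
        by_contra! hsub
        exact (card_lt_card ((ssubset_iff_of_subset hsub).2 ⟨j, by grind⟩)).not_ge hUV1
      refine ⟨j, hj, i, by grind, hN1 i (mem_inter.1 hi).2 j hjN1, ?_⟩
      rwa [insert_inter_of_mem (mem_inter.1 hi).2, erase_inter,
        card_insert_erase_of_mem_of_notMem (by grind) hiU]
    · obtain ⟨j, hj⟩ : (U \ V).Nonempty := card_pos.1 (by omega)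
      obtain ⟨i, hi⟩ : (V \ U).Nonempty := by
        by_contra! hsub
        rw [sdiff_eq_empty_iff_subset] at hsub
        exact (card_lt_card ((ssubset_iff_of_subset hsub).2 ⟨j, by grind⟩)).not_ge hUV
      refine ⟨j, hj, i, hi, hN1c i j (fun h => hU1 ⟨j, hj, h⟩), card_le_card fun x hx => ?_⟩
      grind

lemma mem_of_strictDesir (hN1 : ∀ i ∈ N1, ∀ j ∈ N1, Desir χ i j)
    (hN1c : ∀ i, ∀ j ∉ N1, Desir χ i j) {i j : Fin n} (h : StrictDesir χ i j) :
    i ∈ N1 ∧ j ∉ N1 := by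
  have hi : i ∈ N1 := by_contra fun hi => h.2 (hN1c j i hi)
  exact ⟨hi, fun hj => h.2 (hN1 j hj i hi)⟩

lemma exists_shiftMinWin_card_le (hN1 : ∀ i ∈ N1, ∀ j ∈ N1, Desir χ i j)
    (hN1c : ∀ i, ∀ j ∉ N1, Desir χ i j) {U : Finset (Fin n)} (hU : χ U) :
    ∃ S, ShiftMinWin χ S ∧ #(S ∩ N1) ≤ #(U ∩ N1) ∧ #S ≤ #U := by
  induction hm : #U + #(U ∩ N1) using Nat.strong_induction_on generalizing U with
  | _ m ih =>
  by_cases hmin : ShiftMinWin χ U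
  · exact ⟨U, hmin, le_rfl, le_rfl⟩
  by_cases herase : ∃ i ∈ U, χ (U.erase i)
  · obtain ⟨i, hi, hwin⟩ := herase
    have h1 : #(U.erase i ∩ N1) ≤ #(U ∩ N1) :=
      card_le_card (inter_subset_inter_right (erase_subset i U))
    have h2 := card_erase_add_one hi
    obtain ⟨S, hS, hS1, hS2⟩ := ih _ (by omega) hwin rfl
    exact ⟨S, hS, hS1.trans h1, by omega⟩
  · obtain ⟨i, hi, j, hj, hij, hwin⟩ :
        ∃ i ∈ U, ∃ j ∉ U, StrictDesir χ i j ∧ χ (insert j (U.erase i)) := by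
      by_contra! h
      exact hmin ⟨hU, fun i hi hw => herase ⟨i, hi, hw⟩, h⟩
    obtain ⟨hiN1, hjN1⟩ := mem_of_strictDesir hN1 hN1c hij
    have h1 := card_insert_erase_inter_add_one hi hiN1 hjN1
    have h2 := card_insert_erase_of_mem_of_notMem hi hj
    obtain ⟨S, hS, hS1, hS2⟩ := ih _ (by omega) hwin rfl
    exact ⟨S, hS, by omega, by omega⟩

lemma exists_shiftMinWin_of_numWinTypes2_eq_one (hr : NumWinTypes2 χ N1 N2 = 1) :
    ∃ S₀, ShiftMinWin χ S₀ ∧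
      ∀ S, ShiftMinWin χ S → #(S ∩ N1) = #(S₀ ∩ N1) ∧ #(S ∩ N2) = #(S₀ ∩ N2) := by
  obtain ⟨p, hp⟩ := Set.ncard_eq_one.1 hr
  have hmem (S) (hS : ShiftMinWin χ S) : (#(S ∩ N1), #(S ∩ N2)) = p :=
    Set.mem_singleton_iff.1 (hp ▸ ⟨S, hS, rfl⟩)
  obtain ⟨S₀, hS₀, -⟩ :
      p ∈ {p | ∃ U, ShiftMinWin χ U ∧ p = (#(U ∩ N1), #(U ∩ N2))} := hp ▸ rfl
  exact ⟨S₀, hS₀, fun S hS => Prod.ext_iff.1 ((hmem S hS).trans (hmem S₀ hS₀).symm)⟩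

/-- The two-type game whose shift-minimal winning coalitions all have type `(a, b)`. -/
structure IsOneTypeGame (χ : Finset (Fin n) → Prop) (N1 N2 : Finset (Fin n)) (a b : ℕ) :
    Prop where
  compl_eq : N1ᶜ = N2
  one_le : 1 ≤ a
  le_card : a ≤ #N1
  lt_card : b < #N2
  win_iff : ∀ U, χ U ↔ a ≤ #(U ∩ N1) ∧ a + b ≤ #U

theorem TwoTypes.exists_isOneTypeGame (hsg : SimpleGame n χ) (h2 : TwoTypes χ N1 N2)
    (hr : NumWinTypes2 χ N1 N2 = 1) : ∃ a b, IsOneTypeGame χ N1 N2 a b := by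
  obtain ⟨⟨i₀, hi₀⟩, ⟨j₀, hj₀⟩, hd, hN, hE1, hE2, hS⟩ := h2
  obtain rfl : N1ᶜ = N2 := IsCompl.compl_eq ⟨hd, codisjoint_iff.2 hN⟩
  have hN1 : ∀ i ∈ N1, ∀ j ∈ N1, Desir χ i j := fun i hi j hj => (hE1 i hi j hj).1
  have hN1c : ∀ i, ∀ j ∉ N1, Desir χ i j := fun i j hj => by
    by_cases hi : i ∈ N1
    · exact (hS i hi j (mem_compl.2 hj)).1
    · exact (hE2 i (mem_compl.2 hi) j (mem_compl.2 hj)).1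
  have hcard (U : Finset (Fin n)) := card_inter_add_card_inter_compl U N1
  obtain ⟨S₀, hS₀, htype⟩ := exists_shiftMinWin_of_numWinTypes2_eq_one hr
  have hwin (U : Finset (Fin n)) :
      χ U ↔ #(S₀ ∩ N1) ≤ #(U ∩ N1) ∧ #(S₀ ∩ N1) + #(S₀ ∩ N1ᶜ) ≤ #U := by
    have := hcard S₀
    refine ⟨fun hU => ?_, fun h => win_of_card_le hsg.1 hN1 hN1c hS₀.1 h.1 (by omega)⟩
    obtain ⟨S, hS, hS1, hS2⟩ := exists_shiftMinWin_card_le hN1 hN1c hU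
    have := htype S hS
    have := hcard S
    omega
  -- a coalition witnessing that `j₀` is not as desirable as `i₀` forces `1 ≤ a` and `b < #N2`
  obtain ⟨U, hi₀U, hj₀U, hU, hU'⟩ :
      ∃ U, i₀ ∈ U ∧ j₀ ∉ U ∧ χ U ∧ ¬ χ (insert j₀ (U.erase i₀)) := by
    simpa [Desir] using (hS i₀ hi₀ j₀ hj₀).2
  rw [hwin] at hU hU'
  have h1 := card_insert_erase_inter_add_one hi₀U hi₀ (mem_compl.1 hj₀)
  have h2 := card_insert_erase_of_mem_of_notMem hi₀U hj₀U
  have h3 : 1 ≤ #(U ∩ N1) := card_pos.2 ⟨i₀, mem_inter.2 ⟨hi₀U, hi₀⟩⟩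
  have h4 : #(U ∩ N1ᶜ) < #N1ᶜ :=
    card_lt_card ⟨inter_subset_right, fun h => hj₀U (mem_of_mem_inter_left (h hj₀))⟩
  have := hcard U
  exact ⟨_, _, rfl, by omega, card_le_card inter_subset_right, by omega, hwin⟩

lemma IsRep.sum_lt_sum {q : ℕ} {w : Fin n → ℕ} (hrep : IsRep χ q w) {U V : Finset (Fin n)}
    (hU : χ U) (hV : ¬ χ V) : ∑ i ∈ V, w i < ∑ i ∈ U, w i :=
  lt_of_lt_of_le (not_le.1 (mt (hrep V).2 hV)) ((hrep U).1 hU)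

def oneTypeWeight (N1 N2 : Finset (Fin n)) (a b : ℕ) (i : Fin n) : ℕ :=
  if i ∈ N1 then (#N2 - b) * min (#N1 - a + 1) b + 1 else min (#N1 - a + 1) b

namespace IsOneTypeGame

variable {a b q : ℕ} {w : Fin n → ℕ}

lemma disjoint (hg : IsOneTypeGame χ N1 N2 a b) : Disjoint N1 N2 :=
  hg.compl_eq ▸ disjoint_compl_right

lemma win_union_iff (hg : IsOneTypeGame χ N1 N2 a b) {A B : Finset (Fin n)} (hA : A ⊆ N1)
    (hB : B ⊆ N2) : χ (A ∪ B) ↔ a ≤ #A ∧ a + b ≤ #A + #B := by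
  rw [hg.win_iff, card_union_of_disjoint (hg.disjoint.mono hA hB), union_inter_distrib_right,
    inter_eq_left.2 hA, disjoint_iff_inter_eq_empty.1 (hg.disjoint.symm.mono_left hB),
    union_empty]

lemma sum_lt_weight (hg : IsOneTypeGame χ N1 N2 a b) (hrep : IsRep χ q w) {i : Fin n}
    (hi : i ∈ N1) {D : Finset (Fin n)} (hD : D ⊆ N2) (hDb : #D + b ≤ #N2) :
    ∑ j ∈ D, w j < w i := by
  obtain ⟨B, hB, hBcard⟩ := exists_subset_card_eq (s := N2 \ D) (n := b) (by
    rw [card_sdiff_of_subset hD]; omega)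
  obtain ⟨A, hA, hAcard⟩ := exists_subset_card_eq (s := N1.erase i) (n := a - 1) (by
    rw [card_erase_of_mem hi]; have := hg.le_card; omega)
  have hBN2 : B ⊆ N2 := hB.trans sdiff_subset
  have hAN1 : A ⊆ N1 := hA.trans (erase_subset i N1)
  have hiA : i ∉ A := fun h => (mem_erase.1 (hA h)).1 rfl
  have hwin : χ (insert i A ∪ B) := by
    rw [hg.win_union_iff (insert_subset hi hAN1) hBN2, card_insert_of_notMem hiA]
    have := hg.one_le
    omega
  have hlose : ¬ χ (A ∪ (D ∪ B)) := by
    rw [hg.win_union_iff hAN1 (union_subset hD hBN2)]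
    have := hg.one_le
    omega
  have := hrep.sum_lt_sum hwin hlose
  rw [sum_union (hg.disjoint.mono (insert_subset hi hAN1) hBN2), sum_insert hiA,
    sum_union (hg.disjoint.mono hAN1 (union_subset hD hBN2)),
    sum_union (disjoint_of_subset_right hB disjoint_sdiff)] at this
  omega

lemma mul_lt_weight (hg : IsOneTypeGame χ N1 N2 a b) (hrep : IsRep χ q w) {k : Fin n}
    (hk : k ∈ N2) {e d : ℕ} (heN1 : e ≤ #N1 - a) (heb : e < b)
    (hdom : ∀ c ∈ N1, ∀ m ∈ N2.erase k, w m + d ≤ w c) : e * d < w k := by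
  obtain ⟨A, hAN1, hAcard⟩ := exists_subset_card_eq hg.le_card
  obtain ⟨C, hC, hCcard⟩ := exists_subset_card_eq (s := N1 \ A) (n := e) (by
    rw [card_sdiff_of_subset hAN1]; omega)
  obtain ⟨F, hF, hFcard⟩ := exists_subset_card_eq (s := N2.erase k) (n := b - 1) (by
    rw [card_erase_of_mem hk]; have := hg.lt_card; omega)
  obtain ⟨E, hE, hEcard⟩ := exists_subset_card_eq (s := F) (n := e) (by omega)
  have hCN1 : C ⊆ N1 := hC.trans sdiff_subset
  have hFN2 : F ⊆ N2 := hF.trans (erase_subset k N2)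
  have hkF : k ∉ F := fun h => (mem_erase.1 (hF h)).1 rfl
  have hAC : Disjoint A C := disjoint_of_subset_right hC disjoint_sdiff
  -- trading `k` and `E` for `C` turns a winning coalition into a losing one
  have hwin : χ (A ∪ insert k F) := by
    rw [hg.win_union_iff hAN1 (insert_subset hk hFN2), card_insert_of_notMem hkF]
    omega
  have hlose : ¬ χ ((A ∪ C) ∪ (F \ E)) := by
    rw [hg.win_union_iff (union_subset hAN1 hCN1) (sdiff_subset.trans hFN2),
      card_union_of_disjoint hAC, card_sdiff_of_subset hE]
    omega
  have hsum := hrep.sum_lt_sum hwin hlose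
  rw [sum_union (hg.disjoint.mono hAN1 (insert_subset hk hFN2)), sum_insert hkF,
    sum_union (hg.disjoint.mono (union_subset hAN1 hCN1) (sdiff_subset.trans hFN2)),
    sum_union hAC, ← sum_sdiff hE] at hsum
  have hCE := sum_add_card_mul_le_sum (hEcard.trans hCcard.symm) fun c hc m hm =>
    hdom c (hCN1 hc) m (hF (hE hm))
  rw [hCcard] at hCE
  omega

lemma min_le_weight (hg : IsOneTypeGame χ N1 N2 a b) (hrep : IsRep χ q w) {k : Fin n}
    (hk : k ∈ N2) : min (#N1 - a + 1) b ≤ w k := by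
  rcases Nat.eq_zero_or_pos b with rfl | hb
  · simp
  have hdom : ∀ c ∈ N1, ∀ m ∈ N2.erase k, w m + 1 ≤ w c := fun c hc m hm => by
    simpa using hg.sum_lt_weight hrep hc (singleton_subset_iff.2 (mem_of_mem_erase hm))
      (by simpa [add_comm] using hg.lt_card)
  have := hg.mul_lt_weight hrep hk (min_le_left (#N1 - a) (b - 1)) (by omega) hdom
  omega

lemma min_eq_zero_or_card_le (hg : IsOneTypeGame χ N1 N2 a b) (hrep : IsRep χ q w) :
    min (#N1 - a) (b - 1) = 0 ∨ #N2 ≤ b + 1 := by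
  by_contra! h
  obtain ⟨k, hk⟩ := card_pos.1 (hg.lt_card.trans_le' (Nat.zero_le b))
  have hdom : ∀ c ∈ N1, ∀ m ∈ N2.erase k, w m + (w k + 1) ≤ w c := fun c hc m hm => by
    have hmk := mem_erase.1 hm
    have := hg.sum_lt_weight hrep hc (insert_subset hmk.2 (singleton_subset_iff.2 hk))
      (by rw [card_pair hmk.1]; omega)
    rw [sum_pair hmk.1] at this
    omega
  have := hg.mul_lt_weight hrep hk (min_le_left (#N1 - a) (b - 1)) (by omega) hdom
  have : w k + 1 ≤ min (#N1 - a) (b - 1) * (w k + 1) :=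
    Nat.le_mul_of_pos_left _ (Nat.pos_of_ne_zero h.1)
  omega

lemma card_mul_min_lt_weight (hg : IsOneTypeGame χ N1 N2 a b) (hrep : IsRep χ q w)
    {i : Fin n} (hi : i ∈ N1) : (#N2 - b) * min (#N1 - a + 1) b < w i := by
  obtain ⟨D, hD, hDcard⟩ := exists_subset_card_eq (Nat.sub_le #N2 b)
  have h1 := hg.sum_lt_weight hrep hi hD (by have := hg.lt_card; omega)
  have h2 : (#N2 - b) * min (#N1 - a + 1) b ≤ ∑ j ∈ D, w j := by
    rw [← hDcard, ← smul_eq_mul]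
    exact card_nsmul_le_sum D w _ fun k hk => hg.min_le_weight hrep (hD hk)
  omega

lemma sum_oneTypeWeight (hg : IsOneTypeGame χ N1 N2 a b) (U : Finset (Fin n)) :
    ∑ i ∈ U, oneTypeWeight N1 N2 a b i =
      #(U ∩ N1) * ((#N2 - b) * min (#N1 - a + 1) b + 1) + #(U ∩ N2) * min (#N1 - a + 1) b := by
  simp only [oneTypeWeight, sum_ite, sum_const, smul_eq_mul, filter_mem_eq_inter,
    filter_notMem_eq_sdiff, sdiff_eq_inter_compl, hg.compl_eq]

lemma isRep_oneTypeWeight (hg : IsOneTypeGame χ N1 N2 a b) (hrep : IsRep χ q w) :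
    IsRep χ (a * ((#N2 - b) * min (#N1 - a + 1) b + 1) + b * min (#N1 - a + 1) b)
      (oneTypeWeight N1 N2 a b) := fun U => by
  rw [hg.sum_oneTypeWeight, hg.win_iff, ← card_inter_add_card_inter_compl U N1, hg.compl_eq]
  exact le_and_add_le_iff_mul_add_mul_le rfl rfl hg.lt_card (hg.min_eq_zero_or_card_le hrep)
    (card_le_card inter_subset_right) (card_le_card inter_subset_right)

lemma oneTypeWeight_le (hg : IsOneTypeGame χ N1 N2 a b) (hrep : IsRep χ q w) (i : Fin n) :
    oneTypeWeight N1 N2 a b i ≤ w i := by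
  unfold oneTypeWeight
  split_ifs with hi
  · exact hg.card_mul_min_lt_weight hrep hi
  · exact hg.min_le_weight hrep (hg.compl_eq ▸ mem_compl.2 hi)

end IsOneTypeGame

end

theorem stmt1 (n : ℕ) (χ : Finset (Fin n) → Prop) (hsg : SimpleGame n χ)
    (hwt : IsWeighted χ) (N1 N2 : Finset (Fin n)) (h2 : TwoTypes χ N1 N2)
    (hr : NumWinTypes2 χ N1 N2 = 1) :
    ∃ (q : ℕ) (w : Fin n → ℕ), MinRep χ q w := by
  obtain ⟨a, b, hg⟩ := h2.exists_isOneTypeGame hsg hr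
  obtain ⟨q, w, hrep⟩ := hwt
  exact ⟨_, _, hg.isRep_oneTypeWeight hrep, fun _ _ hrep' => hg.oneTypeWeight_le hrep'⟩
end

section
/- Let χ be a weighted game on n voters with exactly two types of voters such that every voter of one of the two equivalence classes is a null voter. Then χ admits a minimum integer representation. -/
/-!
The null class must be `N2`: every voter is at least as desirable as a null one, while those of
`N1` are strictly more desirable than those of `N2`. So a coalition wins iff its part in `N1` wins,
and as the voters of `N1` are interchangeable this happens iff that part has at least `k` members,
for the least size `k` of a winning subset of `N1`. Hence `[k; 1_{N1}]` represents the game. It is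
minimum: a voter of weight `0` in any representation is null, so every voter of `N1` gets weight
at least `1` there.
-/

open Finset

variable {n : ℕ} {χ : Finset (Fin n) → Prop}

lemma NullVoter.erase_iff {i : Fin n} (hi : NullVoter χ i) (U : Finset (Fin n)) :
    χ (U.erase i) ↔ χ U := by
  by_cases h : i ∈ U
  · rw [← hi (U.erase i), insert_erase h]
  · rw [erase_eq_of_notMem h]

lemma NullVoter.sdiff_iff {S : Finset (Fin n)} (hS : ∀ j ∈ S, NullVoter χ j)
    (U : Finset (Fin n)) : χ (U \ S) ↔ χ U := by
  induction S using Finset.induction_on with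
  | empty => simp
  | insert j S hj ih =>
    rw [sdiff_insert, (hS j (mem_insert_self j S)).erase_iff]
    exact ih fun k hk => hS k (mem_insert_of_mem hk)

lemma NullVoter.desir (mono : Monotone χ) {i : Fin n}
    (hi : NullVoter χ i) (j : Fin n) : Desir χ j i :=
  fun U _ _ hU => mono (subset_insert _ _) ((hi.erase_iff U).2 hU)

lemma StrictDesir.not_nullVoter (mono : Monotone χ)
    {i j : Fin n} (h : StrictDesir χ i j) : ¬ NullVoter χ i :=
  fun hi => h.2 (hi.desir mono j)

lemma IsRep.nullVoter_of_eq_zero {q : ℕ} {w : Fin n → ℕ} (hw : IsRep χ q w) {i : Fin n}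
    (hi : w i = 0) : NullVoter χ i := by
  intro U
  rw [hw, hw]
  by_cases h : i ∈ U
  · rw [insert_eq_of_mem h]
  · rw [sum_insert h, hi, zero_add]

lemma winning_of_card_le (mono : Monotone χ)
    {N : Finset (Fin n)} (hN : ∀ i ∈ N, ∀ j ∈ N, Desir χ i j) {V W : Finset (Fin n)}
    (hV : V ⊆ N) (hW : W ⊆ N) (hcard : #V ≤ #W) (hwin : χ V) : χ W := by
  induction h : #(V \ W) using Nat.strong_induction_on generalizing V with
  | _ k ih =>
    obtain hVW | ⟨i, hi⟩ := (V \ W).eq_empty_or_nonempty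
    · exact mono (sdiff_eq_empty_iff_subset.1 hVW) hwin
    -- trade `i ∈ V \ W` for some `j ∈ W \ V`, which shrinks `V \ W`
    rw [mem_sdiff] at hi
    obtain ⟨j, hj⟩ : (W \ V).Nonempty := sdiff_nonempty.2 fun hWV =>
      hi.2 (eq_of_subset_of_card_le hWV hcard ▸ hi.1)
    rw [mem_sdiff] at hj
    have hswap : insert j (V.erase i) \ W = (V \ W).erase i := by
      rw [insert_sdiff_of_mem _ hj.1, erase_sdiff_comm]
    refine ih _ ?_ (insert_subset (hW hj.1) ((erase_subset i V).trans hV)) ?_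
      (hN j (hW hj.1) i (hV hi.1) V hi.1 hj.2 hwin) rfl
    · rw [hswap, ← h]
      exact card_erase_lt_of_mem (mem_sdiff.2 hi)
    · rwa [card_insert_of_notMem (fun h => hj.2 (mem_of_mem_erase h)),
        card_erase_add_one hi.1]

lemma isRep_indicator_of_forall_inter_iff
    (mono : Monotone χ)
    {N : Finset (Fin n)} (hN : ∀ i ∈ N, ∀ j ∈ N, Desir χ i j) (hNwin : χ N)
    (hinter : ∀ U, χ (U ∩ N) ↔ χ U) :
    IsRep χ (sInf {k | ∃ V ⊆ N, #V = k ∧ χ V}) (fun i => if i ∈ N then 1 else 0) := by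
  intro U
  have hsum : ∑ i ∈ U, (if i ∈ N then 1 else 0) = #(U ∩ N) := by
    rw [sum_boole, Nat.cast_id, filter_mem_eq_inter]
  rw [hsum, ← hinter U]
  constructor
  · exact fun hU => Nat.sInf_le ⟨U ∩ N, inter_subset_right, rfl, hU⟩
  · intro hle
    obtain ⟨V, hVN, hV, hVwin⟩ := Nat.sInf_mem (s := {k | ∃ V ⊆ N, #V = k ∧ χ V})
      ⟨#N, N, subset_refl N, rfl, hNwin⟩
    exact winning_of_card_le mono hN hVN inter_subset_right (hV ▸ hle) hVwin

theorem stmt2_general (n : ℕ) (χ : Finset (Fin n) → Prop) (hsg : SimpleGame n χ)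
    (N1 N2 : Finset (Fin n)) (h2 : TwoTypes χ N1 N2)
    (hnull : (∀ i ∈ N1, NullVoter χ i) ∨ (∀ i ∈ N2, NullVoter χ i)) :
    ∃ (q : ℕ) (w : Fin n → ℕ), MinRep χ q w := by
  obtain ⟨mono, -, huniv⟩ := hsg
  replace mono : Monotone χ := fun U V => mono U V
  obtain ⟨⟨i₁, hi₁⟩, ⟨i₂, hi₂⟩, hdisj, hcup, heq1, -, hstrict⟩ := h2
  have hnull2 : ∀ i ∈ N2, NullVoter χ i :=
    hnull.resolve_left fun h => (hstrict i₁ hi₁ i₂ hi₂).not_nullVoter mono (h i₁ hi₁)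
  have hcompl : N2ᶜ = N1 := (isCompl_iff.2 ⟨hdisj, codisjoint_iff.2 hcup⟩).symm.compl_eq
  have hinter : ∀ U, χ (U ∩ N1) ↔ χ U := fun U => by
    rw [← hcompl, ← sdiff_eq_inter_compl]
    exact NullVoter.sdiff_iff hnull2 U
  have hrep := isRep_indicator_of_forall_inter_iff mono (fun i hi j hj => (heq1 i hi j hj).1)
    (by simpa using (hinter univ).2 huniv) hinter
  refine ⟨_, _, hrep, fun q' w' hrep' i => ?_⟩
  by_cases hi : i ∈ N1
  · simp only [if_pos hi, Nat.one_le_iff_ne_zero]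
    exact fun h0 => (hstrict i hi i₂ hi₂).not_nullVoter mono (hrep'.nullVoter_of_eq_zero h0)
  · simp [hi]

theorem stmt2 (n : ℕ) (χ : Finset (Fin n) → Prop) (hsg : SimpleGame n χ)
    (hwt : IsWeighted χ) (N1 N2 : Finset (Fin n)) (h2 : TwoTypes χ N1 N2)
    (hnull : (∀ i ∈ N1, NullVoter χ i) ∨ (∀ i ∈ N2, NullVoter χ i)) :
    ∃ (q : ℕ) (w : Fin n → ℕ), MinRep χ q w :=
  stmt2_general n χ hsg N1 N2 h2 hnull
end

section
/- Let χ be a weighted game on n voters with exactly two types of voters, without null voters, and with at least two distinct types of shift-minimal winning coalitions (r ≥ 2). Then every LP-feasible triple (w1, w2, q) of nonnegative reals satisfies w1 ≥ w2 + 1. -/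
/-! Voters of one class are interchangeable, so whether a coalition wins depends only on its type
`(|U ∩ N1|, |U ∩ N2|)`, and monotonically. Types of shift-minimal winning coalitions therefore form
an antichain, and two of them are `(a₁, a₂)` and `(b₁, b₂)` with `a₁ > b₁`, `a₂ < b₂`. Shifting an
`N1`-voter of the first coalition to `N2` gives a losing coalition of type `(a₁ - 1, a₂ + 1)`; for
the largest `y` such that type `(a₁ - 1, y)` loses, a coalition of that type is shift-maximal
losing. The two LP constraints then give `w₁ ≥ (y - a₂) w₂ + 1 ≥ w₂ + 1`. -/

open Finset

section CoalitionType

variable {α : Type*} [DecidableEq α] {N1 N2 U V : Finset α} {i : α}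

def coalType (N1 N2 U : Finset α) : ℕ × ℕ := (#(U ∩ N1), #(U ∩ N2))

lemma exists_subset_coalType_eq (hd : Disjoint N1 N2) {c : ℕ × ℕ} (h : c ≤ coalType N1 N2 V) :
    ∃ S ⊆ V, coalType N1 N2 S = c := by
  obtain ⟨S1, hS1, hc1⟩ := exists_subset_card_eq h.1
  obtain ⟨S2, hS2, hc2⟩ := exists_subset_card_eq h.2
  have hS1N : S1 ⊆ N1 := hS1.trans inter_subset_right
  have hS2N : S2 ⊆ N2 := hS2.trans inter_subset_right
  refine ⟨S1 ∪ S2, union_subset (hS1.trans inter_subset_left) (hS2.trans inter_subset_left), ?_⟩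
  rw [coalType, union_inter_distrib_right, union_inter_distrib_right, inter_eq_left.mpr hS1N,
    inter_eq_left.mpr hS2N, disjoint_iff_inter_eq_empty.mp (hd.symm.mono_left hS2N),
    disjoint_iff_inter_eq_empty.mp (hd.mono_left hS1N), union_empty, empty_union, hc1, hc2]

lemma coalType_insert_of_mem_left (hd : Disjoint N1 N2) (hi : i ∈ N1) (hiU : i ∉ U) :
    coalType N1 N2 (insert i U) = coalType N1 N2 U + (1, 0) := by
  simp [coalType, insert_inter_of_mem hi, insert_inter_of_notMem (disjoint_left.mp hd hi),
    card_insert_of_notMem (fun h => hiU (mem_of_mem_inter_left h))]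

lemma coalType_insert_of_mem_right (hd : Disjoint N1 N2) (hi : i ∈ N2) (hiU : i ∉ U) :
    coalType N1 N2 (insert i U) = coalType N1 N2 U + (0, 1) := by
  simp [coalType, insert_inter_of_mem hi, insert_inter_of_notMem (disjoint_right.mp hd hi),
    card_insert_of_notMem (fun h => hiU (mem_of_mem_inter_left h))]

lemma coalType_erase_add_left (hd : Disjoint N1 N2) (hi : i ∈ N1) (hiU : i ∈ U) :
    coalType N1 N2 (U.erase i) + (1, 0) = coalType N1 N2 U := by
  rw [← coalType_insert_of_mem_left hd hi (notMem_erase i U), insert_erase hiU]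

lemma coalType_erase_add_right (hd : Disjoint N1 N2) (hi : i ∈ N2) (hiU : i ∈ U) :
    coalType N1 N2 (U.erase i) + (0, 1) = coalType N1 N2 U := by
  rw [← coalType_insert_of_mem_right hd hi (notMem_erase i U), insert_erase hiU]

lemma exists_mem_le_coalType_erase (hd : Disjoint N1 N2) {c : ℕ × ℕ}
    (h : c ≤ coalType N1 N2 U) (hne : c ≠ coalType N1 N2 U) :
    ∃ i ∈ U, c ≤ coalType N1 N2 (U.erase i) := by
  rcases h.lt_of_ne hne |> Prod.lt_iff.mp with ⟨hlt, -⟩ | ⟨-, hlt⟩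
  · obtain ⟨i, hi⟩ : (U ∩ N1).Nonempty := card_pos.mp (Nat.zero_lt_of_lt hlt)
    rw [mem_inter] at hi
    refine ⟨i, hi.1, ?_⟩
    have := coalType_erase_add_left hd hi.2 hi.1
    rw [← this] at h hlt
    simp only [Prod.le_def, Prod.fst_add, Prod.snd_add] at h hlt ⊢
    omega
  · obtain ⟨i, hi⟩ : (U ∩ N2).Nonempty := card_pos.mp (Nat.zero_lt_of_lt hlt)
    rw [mem_inter] at hi
    refine ⟨i, hi.1, ?_⟩
    have := coalType_erase_add_right hd hi.2 hi.1
    rw [← this] at h hlt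
    simp only [Prod.le_def, Prod.fst_add, Prod.snd_add] at h hlt ⊢
    omega

end CoalitionType

section Game

variable {n : ℕ} {χ : Finset (Fin n) → Prop} {N1 N2 U V W L : Finset (Fin n)} {i j : Fin n}

lemma VEquiv.iff_insert_erase (h : VEquiv χ i j) (hi : i ∈ U) (hj : j ∉ U) :
    χ (insert j (U.erase i)) ↔ χ U := by
  refine ⟨fun hU' => ?_, h.2 U hi hj⟩
  have hij : i ≠ j := fun hij => hj (hij ▸ hi)
  have hiU' : i ∉ insert j (U.erase i) := by simp [hij]
  simpa [erase_insert (fun h => hj (mem_of_mem_erase h)), insert_erase hi] using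
    h.1 _ (mem_insert_self j _) hiU' hU'

theorem iff_of_sdiff_eq_of_card_inter_eq {C : Finset (Fin n)}
    (hC : ∀ i ∈ C, ∀ j ∈ C, VEquiv χ i j) (hout : U \ C = V \ C)
    (hcard : #(U ∩ C) = #(V ∩ C)) : χ U ↔ χ V := by
  induction hk : #(U \ V) generalizing U with
  | zero =>
    have hUV : U ⊆ V := sdiff_eq_empty_iff_subset.mp (card_eq_zero.mp hk)
    rw [← sdiff_union_inter U C, ← sdiff_union_inter V C, hout,
      eq_of_subset_of_card_le (inter_subset_inter_right hUV) hcard.ge]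
  | succ k ih =>
    obtain ⟨i, hi⟩ : (U \ V).Nonempty := card_pos.mp (by omega)
    have hiC : i ∈ C := by
      by_contra hiC
      have := hout ▸ mem_sdiff.mpr ⟨(mem_sdiff.mp hi).1, hiC⟩
      exact (mem_sdiff.mp hi).2 (mem_sdiff.mp this).1
    obtain ⟨j, hj⟩ : ((V ∩ C) \ (U ∩ C)).Nonempty := by
      rw [sdiff_nonempty]
      intro hsub
      have := eq_of_subset_of_card_le hsub hcard.le ▸ mem_inter.mpr ⟨(mem_sdiff.mp hi).1, hiC⟩
      exact (mem_sdiff.mp hi).2 (mem_inter.mp this).1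
    simp only [mem_sdiff, mem_inter, not_and] at hi hj
    have hjU : j ∉ U := fun h => hj.2 h hj.1.2
    rw [← (hC i hiC j hj.1.2).iff_insert_erase hi.1 hjU]
    apply ih
    · rw [insert_sdiff_of_mem _ hj.1.2, erase_sdiff_comm,
        erase_eq_of_notMem (fun h => (mem_sdiff.mp h).2 hiC), hout]
    · rw [insert_inter_of_mem hj.1.2, erase_inter,
        card_insert_of_notMem (fun h => hjU (mem_of_mem_inter_left (mem_of_mem_erase h))),
        card_erase_add_one (mem_inter.mpr ⟨hi.1, hiC⟩), hcard]
    · rw [insert_sdiff_of_mem _ hj.1.1, erase_sdiff_comm, card_erase_of_mem (mem_sdiff.mpr hi),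
        hk, Nat.add_sub_cancel]

namespace TwoTypes

lemma compl_eq (h : TwoTypes χ N1 N2) : N1ᶜ = N2 :=
  IsCompl.compl_eq ⟨h.2.2.1, codisjoint_iff.mpr h.2.2.2.1⟩

lemma mem_or_mem (h : TwoTypes χ N1 N2) (i : Fin n) : i ∈ N1 ∨ i ∈ N2 :=
  mem_union.mp (h.2.2.2.1 ▸ mem_univ i)

lemma mem_of_strictDesir (h : TwoTypes χ N1 N2) (hij : StrictDesir χ i j) : i ∈ N1 ∧ j ∈ N2 := by
  rcases h.mem_or_mem i with hi | hi <;> rcases h.mem_or_mem j with hj | hj <;>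
    obtain ⟨-, -, -, -, heq1, heq2, hsd⟩ := h
  · exact absurd (heq1 j hj i hi).1 hij.2
  · exact ⟨hi, hj⟩
  · exact absurd hij.1 (hsd j hj i hi).2
  · exact absurd (heq2 j hj i hi).1 hij.2

theorem iff_of_coalType_eq (h : TwoTypes χ N1 N2) (hUV : coalType N1 N2 U = coalType N1 N2 V) :
    χ U ↔ χ V := by
  obtain rfl := h.compl_eq
  obtain ⟨-, -, -, -, heq1, heq2, -⟩ := h
  simp only [coalType, Prod.mk.injEq] at hUV
  have hM1 : (V ∩ N1 ∪ U \ N1) ∩ N1 = V ∩ N1 := by ext; simp; tauto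
  have hM2 : (V ∩ N1 ∪ U \ N1) \ N1 = U \ N1 := by ext; simp; tauto
  calc χ U ↔ χ (V ∩ N1 ∪ U \ N1) := by
        refine iff_of_sdiff_eq_of_card_inter_eq heq1 hM2.symm ?_
        rw [hM1, hUV.1]
    _ ↔ χ V := by
        refine iff_of_sdiff_eq_of_card_inter_eq heq2 ?_ ?_
        · rw [sdiff_compl, sdiff_compl]
          exact hM1
        · rw [← sdiff_eq_inter_compl, hM2, sdiff_eq_inter_compl]
          exact hUV.2

theorem of_coalType_le (h : TwoTypes χ N1 N2) (hmono : Monotone χ) (hU : χ U)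
    (hUV : coalType N1 N2 U ≤ coalType N1 N2 V) : χ V := by
  obtain ⟨S, hSV, hS⟩ := exists_subset_coalType_eq h.2.2.1 hUV
  exact hmono hSV ((h.iff_of_coalType_eq hS).2 hU)

end TwoTypes

theorem ShiftMinWin.coalType_eq_of_le (h : TwoTypes χ N1 N2) (hmono : Monotone χ)
    (hU : ShiftMinWin χ U) (hW : ShiftMinWin χ W) (hUW : coalType N1 N2 U ≤ coalType N1 N2 W) :
    coalType N1 N2 U = coalType N1 N2 W := by
  by_contra hne
  obtain ⟨i, hi, hle⟩ := exists_mem_le_coalType_erase h.2.2.1 hUW hne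
  exact hW.2.1 i hi (h.of_coalType_le hmono hU.1 hle)

theorem exists_shiftMinWin_of_two_le_numWinTypes2 (h : TwoTypes χ N1 N2) (hmono : Monotone χ)
    (hr : 2 ≤ NumWinTypes2 χ N1 N2) :
    ∃ U W, ShiftMinWin χ U ∧ ShiftMinWin χ W ∧
      #(W ∩ N1) < #(U ∩ N1) ∧ #(U ∩ N2) < #(W ∩ N2) := by
  obtain ⟨_, ⟨U, hU, rfl⟩, _, ⟨W, hW, rfl⟩, hne⟩ :=
    (Set.one_lt_ncard (Set.finite_of_ncard_pos (by unfold NumWinTypes2 at hr; omega))).mp hr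
  have hUW := mt (hU.coalType_eq_of_le h hmono hW) hne
  have hWU := mt (hW.coalType_eq_of_le h hmono hU) hne.symm
  simp only [coalType, Prod.mk_le_mk] at hUW hWU
  by_cases h1 : #(W ∩ N1) < #(U ∩ N1)
  · exact ⟨U, W, hU, hW, h1, by omega⟩
  · exact ⟨W, U, hW, hU, by omega, by omega⟩

theorem TwoTypes.shiftMaxLose_of (h : TwoTypes χ N1 N2) (hmono : Monotone χ) (hU : χ U)
    (hL : ¬ χ L) (hL1 : #(L ∩ N1) + 1 = #(U ∩ N1)) (hL2 : #(U ∩ N2) < #(L ∩ N2))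
    (hmax : ∀ j ∈ N2, j ∉ L → χ (insert j L)) : ShiftMaxLose χ L := by
  have hd : Disjoint N1 N2 := h.2.2.1
  refine ⟨hL, fun j hj => ?_, fun j hj i hi hij => ?_⟩
  · rcases h.mem_or_mem j with hj1 | hj2
    · refine h.of_coalType_le hmono hU ?_
      rw [coalType_insert_of_mem_left hd hj1 hj]
      simp only [coalType, Prod.mk_add_mk, Prod.mk_le_mk]
      omega
    · exact hmax j hj2 hj
  · obtain ⟨hi1, hj2⟩ := h.mem_of_strictDesir hij
    refine h.of_coalType_le hmono hU ?_
    have hLj := coalType_erase_add_right hd hj2 hj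
    rw [coalType_insert_of_mem_left hd hi1 (fun h => hi (mem_of_mem_erase h))]
    simp only [coalType, Prod.mk_add_mk, Prod.mk_le_mk, Prod.mk.injEq] at hLj ⊢
    omega

theorem ShiftMinWin.exists_shiftMaxLose (h : TwoTypes χ N1 N2) (hmono : Monotone χ)
    (hU : ShiftMinWin χ U) (hU1 : 0 < #(U ∩ N1)) (hU2 : #(U ∩ N2) < #N2) :
    ∃ L, ShiftMaxLose χ L ∧ #(L ∩ N1) + 1 = #(U ∩ N1) ∧ #(U ∩ N2) < #(L ∩ N2) := by
  classical
  have hd : Disjoint N1 N2 := h.2.2.1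
  obtain ⟨i, hi⟩ := card_pos.mp hU1
  obtain ⟨j, hj⟩ : (N2 \ U).Nonempty := by
    rw [sdiff_nonempty]
    exact fun hsub => hU2.ne (by rw [inter_eq_right.mpr hsub])
  rw [mem_inter] at hi
  rw [mem_sdiff] at hj
  let P : ℕ → Prop := fun y => ∃ L, #(L ∩ N1) + 1 = #(U ∩ N1) ∧ #(L ∩ N2) = y ∧ ¬ χ L
  have hP : P (#(U ∩ N2) + 1) := by
    refine ⟨insert j (U.erase i), ?_, ?_, hU.2.2 i hi.1 j hj.2 (h.2.2.2.2.2.2 i hi.2 j hj.1)⟩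
    all_goals
      have hUi := coalType_erase_add_left hd hi.2 hi.1
      have hUij := coalType_insert_of_mem_right hd hj.1 (U := U.erase i)
        (fun h => hj.2 (mem_of_mem_erase h))
      simp only [coalType, Prod.mk_add_mk, Prod.mk.injEq] at hUi hUij
      omega
  have hP_le {y : ℕ} (hy : P y) : y ≤ #N2 := by
    obtain ⟨L, -, rfl, -⟩ := hy
    exact card_le_card inter_subset_right
  obtain ⟨L, hL1, hL2, hL⟩ := Nat.findGreatest_spec (hP_le hP) hP
  have hlt : #(U ∩ N2) < #(L ∩ N2) := hL2 ▸ Nat.le_findGreatest (hP_le hP) hP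
  refine ⟨L, h.shiftMaxLose_of hmono hU.1 hL hL1 hlt fun k hk hkL => ?_, hL1, hlt⟩
  by_contra hk_lose
  have hPk : P (#(L ∩ N2) + 1) := by
    refine ⟨insert k L, ?_, ?_, hk_lose⟩ <;>
    · have hLk := coalType_insert_of_mem_right hd hk hkL
      simp only [coalType, Prod.mk_add_mk, Prod.mk.injEq] at hLk
      omega
  exact Nat.findGreatest_is_greatest (hL2 ▸ Nat.lt_succ_self _) (hP_le hPk) hPk

end Game

theorem stmt4_general (n : ℕ) (χ : Finset (Fin n) → Prop) (hsg : SimpleGame n χ)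
    (N1 N2 : Finset (Fin n)) (h2 : TwoTypes χ N1 N2)
    (hr : 2 ≤ NumWinTypes2 χ N1 N2) :
    ∀ w1 w2 q : ℝ, LPFeasible χ N1 N2 w1 w2 q → w2 + 1 ≤ w1 := by
  rintro w1 w2 q ⟨-, hw2, -, hwin, hlose⟩
  have hmono : Monotone χ := fun U V hUV => hsg.1 U V hUV
  obtain ⟨U, W, hU, -, h1, hUW2⟩ := exists_shiftMinWin_of_two_le_numWinTypes2 h2 hmono hr
  obtain ⟨L, hL, hL1, hL2⟩ := hU.exists_shiftMaxLose h2 hmono (by omega)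
    (hUW2.trans_le (card_le_card inter_subset_right))
  have hq := hwin U hU
  have hLq := hlose L hL
  have hL1' : (#(L ∩ N1) : ℝ) + 1 = #(U ∩ N1) := by exact_mod_cast hL1
  have hL2' : (#(U ∩ N2) : ℝ) + 1 ≤ #(L ∩ N2) := by exact_mod_cast hL2
  nlinarith [mul_le_mul_of_nonneg_right hL2' hw2]

theorem stmt4 (n : ℕ) (χ : Finset (Fin n) → Prop) (hsg : SimpleGame n χ)
    (hwt : IsWeighted χ) (N1 N2 : Finset (Fin n)) (h2 : TwoTypes χ N1 N2)
    (hnull : ∀ i, ¬ NullVoter χ i) (hr : 2 ≤ NumWinTypes2 χ N1 N2) :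
    ∀ w1 w2 q : ℝ, LPFeasible χ N1 N2 w1 w2 q → w2 + 1 ≤ w1 :=
  stmt4_general n χ hsg N1 N2 h2 hr
end

section
/- Let a, b ∈ ℕ with b > a ≥ 1 and gcd(a, b) = 1, and let n1 ≥ 2a + 1 and n2 ≥ 2b + 1. Let χ be the weighted game on n1 + n2 voters represented by [a·b; w], where w assigns weight b to each of the first n1 voters and weight a to each of the last n2 voters. Then this representation is a minimum integer representation of χ: every integer representation [q'; w'] of χ satisfies q' ≥ a·b, w' i ≥ b for each of the first n1 voters i, and w' i ≥ a for each of the last n2 voters i. -/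
/-!
Fix a voter `i` of weight `c`, let `d` be the other weight, and let `μ`, `μ'` be the average
`w'`-weights of the remaining voters of weight `c` and of the voters of weight `d`. Averaging over
coalitions turns the winning coalitions of `d` voters of weight `c` (with or without `i`) and of
`c` voters of weight `d` into `q' ≤ d μ`, `q' ≤ w' i + (d - 1) μ` and `q' ≤ c μ'`, and the losing
coalitions of `x` voters of weight `c` and `y` of weight `d`, where `c x + d y = c d - 1`, into
`x μ + y μ' + 1 ≤ q'`. Such `x`, `y` exist because `a`, `b` are coprime, and since
`c x = (c - y - 1) d + (d - 1)`, a nonnegative combination of the four inequalities is exactly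
`c ≤ w' i`. Then `w'` dominates the original weights, so the losing coalition of weight
`a b - 1` forces `a b ≤ q'`.
-/

open Finset

section Averaging

variable {ι 𝕜 : Type*} [DecidableEq ι] [Field 𝕜] [LinearOrder 𝕜] [IsStrictOrderedRing 𝕜]

/-- A `k`-subset of maximal `f`-sum dominates every element outside it, so its average is at
least the average over `s`. -/
theorem Finset.exists_subset_card_eq_mul_avg_le_sum {s : Finset ι} {k : ℕ} (hk : k ≤ #s)
    (f : ι → 𝕜) : ∃ t ⊆ s, #t = k ∧ k * ((∑ i ∈ s, f i) / #s) ≤ ∑ i ∈ t, f i := by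
  obtain ⟨t, hts, hmax⟩ := (powersetCard k s).exists_max_image (fun t => ∑ i ∈ t, f i)
    (powersetCard_nonempty.mpr hk)
  rw [mem_powersetCard] at hts
  obtain ⟨hts, rfl⟩ := hts
  refine ⟨t, hts, rfl, ?_⟩
  obtain ht | ⟨j₀, hj₀⟩ := t.eq_empty_or_nonempty
  · simp [ht]
  have hswap : ∀ j' ∈ s \ t, ∀ j ∈ t, f j' ≤ f j := by
    intro j' hj' j hj
    rw [mem_sdiff] at hj'
    have hj't : j' ∉ t.erase j := fun h => hj'.2 (mem_of_mem_erase h)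
    have hmem : insert j' (t.erase j) ∈ powersetCard #t s := by
      rw [mem_powersetCard, card_insert_of_notMem hj't, card_erase_add_one hj]
      exact ⟨insert_subset hj'.1 ((erase_subset j t).trans hts), rfl⟩
    have := hmax _ hmem
    rw [sum_insert hj't, ← add_sum_erase t f hj] at this
    exact le_of_add_le_add_right this
  have hdouble := sum_le_sum fun j' hj' => sum_le_sum fun j hj => hswap j' hj' j hj
  simp only [sum_const, nsmul_eq_mul, ← mul_sum] at hdouble
  have hs : (0 : 𝕜) < #s := by exact_mod_cast card_pos.mpr ⟨j₀, hts hj₀⟩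
  rw [mul_div_assoc', div_le_iff₀ hs, ← sum_sdiff hts, ← card_sdiff_add_card_eq_card hts,
    Nat.cast_add]
  linear_combination hdouble

theorem Finset.exists_subset_card_eq_sum_le_mul_avg {s : Finset ι} {k : ℕ} (hk : k ≤ #s)
    (f : ι → 𝕜) : ∃ t ⊆ s, #t = k ∧ ∑ i ∈ t, f i ≤ k * ((∑ i ∈ s, f i) / #s) := by
  obtain ⟨t, hts, htk, h⟩ := exists_subset_card_eq_mul_avg_le_sum hk (-f)
  refine ⟨t, hts, htk, ?_⟩
  simp only [Pi.neg_apply, sum_neg_distrib, neg_div, mul_neg] at h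
  exact neg_le_neg_iff.mp h

end Averaging

theorem Fin.card_filter_not_val_lt {n m : ℕ} : #{i : Fin n | ¬ (i : ℕ) < m} = n - m := by
  have := card_filter_add_card_filter_not (s := univ) (fun i : Fin n => (i : ℕ) < m)
  rw [Fin.card_filter_val_lt, card_univ, Fintype.card_fin] at this
  omega

theorem Nat.exists_mul_add_mul_add_one_eq_mul {a b : ℕ} (ha : 0 < a) (hb : 0 < b)
    (hco : Nat.Coprime a b) : ∃ x y, x < a ∧ y < b ∧ b * x + a * y + 1 = a * b := by
  obtain ⟨x, hxa, hx⟩ := Nat.exists_mul_mod_eq_of_coprime (a - 1) hco.symm ha.ne'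
  rw [Nat.mod_eq_of_lt (a := a - 1) (by omega)] at hx
  have hdiv := Nat.div_add_mod (b * x) a
  have hlt : b * x / a < b :=
    Nat.div_lt_of_lt_mul (by rw [mul_comm]; exact Nat.mul_lt_mul_of_lt_of_le hxa le_rfl hb)
  obtain ⟨y, hy⟩ : ∃ y, b = b * x / a + 1 + y := ⟨b - (b * x / a) - 1, by omega⟩
  rw [hx] at hdiv
  generalize b * x / a = c at hdiv hy
  refine ⟨x, y, hxa, by omega, ?_⟩
  rw [← hdiv, hy, mul_add, mul_add, mul_one]
  omega

theorem le_of_forall_wins_of_forall_losses {ι : Type*} [DecidableEq ι] {S S' : Finset ι}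
    {w : ι → ℕ} {i : ι} {q c d x y : ℕ}
    (hd : d ≤ #S) (hc : c ≤ #S') (hxy : c * x + d * y + 1 = c * d)
    (hwin : ∀ U ⊆ S, #U = d → q ≤ ∑ j ∈ U, w j)
    (hwin_i : ∀ U ⊆ S, #U + 1 = d → q ≤ w i + ∑ j ∈ U, w j)
    (hwin' : ∀ U ⊆ S', #U = c → q ≤ ∑ j ∈ U, w j)
    (hlose : ∀ U ⊆ S, ∀ U' ⊆ S', #U = x → #U' = y → ∑ j ∈ U, w j + ∑ j ∈ U', w j < q) :
    c ≤ w i := by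
  obtain ⟨k, rfl⟩ : ∃ k, d = k + 1 :=
    Nat.exists_eq_add_one.mpr (Nat.pos_of_ne_zero (by rintro rfl; simp at hxy))
  have hx : x < k + 1 := Nat.lt_of_mul_lt_mul_left (a := c) (by omega)
  have hy : y < c := Nat.lt_of_mul_lt_mul_left (a := k + 1) (by rw [mul_comm _ c]; omega)
  set μ : ℚ := (∑ j ∈ S, (w j : ℚ)) / #S
  set μ' : ℚ := (∑ j ∈ S', (w j : ℚ)) / #S'
  have h_win : (q : ℚ) ≤ (k + 1 : ℕ) * μ := by
    obtain ⟨U, hU, hUc, hsum⟩ := exists_subset_card_eq_sum_le_mul_avg hd (fun j => (w j : ℚ))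
    exact le_trans (by exact_mod_cast hwin U hU hUc) hsum
  have h_win_i : (q : ℚ) ≤ w i + k * μ := by
    obtain ⟨U, hU, hUc, hsum⟩ :=
      exists_subset_card_eq_sum_le_mul_avg (s := S) (k := k) (by omega) (fun j => (w j : ℚ))
    have : (q : ℚ) ≤ w i + ∑ j ∈ U, (w j : ℚ) := by exact_mod_cast hwin_i U hU (by omega)
    linarith
  have h_win' : (q : ℚ) ≤ c * μ' := by
    obtain ⟨U, hU, hUc, hsum⟩ := exists_subset_card_eq_sum_le_mul_avg hc (fun j => (w j : ℚ))
    exact le_trans (by exact_mod_cast hwin' U hU hUc) hsum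
  have h_lose : x * μ + y * μ' + 1 ≤ (q : ℚ) := by
    obtain ⟨U, hU, hUc, hsum⟩ :=
      exists_subset_card_eq_mul_avg_le_sum (by omega : x ≤ #S) (fun j => (w j : ℚ))
    obtain ⟨U', hU', hUc', hsum'⟩ :=
      exists_subset_card_eq_mul_avg_le_sum (by omega : y ≤ #S') (fun j => (w j : ℚ))
    have : ∑ j ∈ U, (w j : ℚ) + ∑ j ∈ U', (w j : ℚ) + 1 ≤ q := by
      exact_mod_cast hlose U hU U' hU' hUc hUc'
    linarith
  have hcy : (0 : ℚ) ≤ c - y - 1 := by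
    have : (y + 1 : ℚ) ≤ c := by exact_mod_cast hy
    linarith
  have hxyℚ : (c * x + (k + 1) * y + 1 : ℚ) = c * (k + 1) := by exact_mod_cast hxy
  push_cast at h_win
  suffices (c : ℚ) ≤ w i by exact_mod_cast this
  nlinarith [mul_le_mul_of_nonneg_left h_lose (Nat.cast_nonneg (α := ℚ) c),
    mul_le_mul_of_nonneg_left h_win' (Nat.cast_nonneg (α := ℚ) y),
    mul_le_mul_of_nonneg_left h_win hcy]

section WeightedGame

variable {n : ℕ} {wt w : Fin n → ℕ} {q : ℕ}

theorem le_apply_of_isRep {c d x y : ℕ} {P P' : Finset (Fin n)} {i : Fin n}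
    (hrep : IsRep (fun U => c * d ≤ ∑ j ∈ U, wt j) q w)
    (hP : ∀ j ∈ P, wt j = c) (hP' : ∀ j ∈ P', wt j = d) (hdisj : Disjoint P P') (hi : i ∈ P)
    (hd : d < #P) (hc : c ≤ #P') (hxy : c * x + d * y + 1 = c * d) : c ≤ w i := by
  replace hrep : ∀ U, c * d ≤ ∑ j ∈ U, wt j ↔ q ≤ ∑ j ∈ U, w j := hrep
  have hsum : ∀ U ⊆ P.erase i, ∑ j ∈ U, wt j = #U * c :=
    fun U hU => sum_const_nat fun j hj => hP j (mem_of_mem_erase (hU hj))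
  have hsum' : ∀ U ⊆ P', ∑ j ∈ U, wt j = #U * d :=
    fun U hU => sum_const_nat fun j hj => hP' j (hU hj)
  refine le_of_forall_wins_of_forall_losses (S := P.erase i) (S' := P') (q := q)
    (by rw [card_erase_of_mem hi]; omega) hc hxy ?_ ?_ ?_ ?_
  · intro U hU hUc
    exact (hrep U).mp (by rw [hsum U hU, hUc, mul_comm])
  · intro U hU hUc
    have hiU : i ∉ U := fun h => notMem_erase i P (hU h)
    rw [← sum_insert hiU]
    exact (hrep _).mp (le_of_eq (by rw [sum_insert hiU, hP i hi, hsum U hU, ← hUc]; ring))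
  · intro U hU hUc
    exact (hrep U).mp (by rw [hsum' U hU, hUc])
  · intro U hU U' hU' hUc hUc'
    have hUU' : Disjoint U U' := hdisj.mono (hU.trans (erase_subset i P)) hU'
    rw [← sum_union hUU', ← not_le, ← hrep, sum_union hUU', hsum U hU, hsum' U' hU', hUc, hUc']
    linarith

theorem le_quota_of_isRep {Q : ℕ} (hrep : IsRep (fun U => Q ≤ ∑ j ∈ U, wt j) q w)
    (hle : ∀ j, wt j ≤ w j) {U : Finset (Fin n)} (hU : ∑ j ∈ U, wt j + 1 = Q) : Q ≤ q := by
  have hlose : ¬ q ≤ ∑ j ∈ U, w j := fun h => by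
    have : Q ≤ ∑ j ∈ U, wt j := (hrep U).mpr h
    omega
  have := sum_le_sum fun j (_ : j ∈ U) => hle j
  omega

end WeightedGame

theorem stmt8 (a b n1 n2 : ℕ) (ha : 1 ≤ a) (hab : a < b) (hco : Nat.Coprime a b)
    (hn1 : 2 * a + 1 ≤ n1) (hn2 : 2 * b + 1 ≤ n2) :
    ∀ (q' : ℕ) (w' : Fin (n1 + n2) → ℕ),
      IsRep (fun U : Finset (Fin (n1 + n2)) =>
          a * b ≤ ∑ i ∈ U, (if (i : ℕ) < n1 then b else a)) q' w' →
      a * b ≤ q' ∧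
        ∀ i : Fin (n1 + n2), (if (i : ℕ) < n1 then b ≤ w' i else a ≤ w' i) := by
  intro q' w' hR
  obtain ⟨x, y, hxa, hyb, hxy⟩ := Nat.exists_mul_add_mul_add_one_eq_mul ha (by omega) hco
  set N1 : Finset (Fin (n1 + n2)) := {i | (i : ℕ) < n1}
  set N2 : Finset (Fin (n1 + n2)) := {i | ¬ (i : ℕ) < n1}
  have hN1 : #N1 = n1 := by simp [N1, Fin.card_filter_val_lt]
  have hN2 : #N2 = n2 := by rw [Fin.card_filter_not_val_lt]; omega
  have hdisj : Disjoint N1 N2 := disjoint_filter_filter_not _ _ _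
  have hwt1 : ∀ j ∈ N1, (if (j : ℕ) < n1 then b else a) = b :=
    fun j hj => if_pos (mem_filter.mp hj).2
  have hwt2 : ∀ j ∈ N2, (if (j : ℕ) < n1 then b else a) = a :=
    fun j hj => if_neg (mem_filter.mp hj).2
  have hw : ∀ i : Fin (n1 + n2), (if (i : ℕ) < n1 then b ≤ w' i else a ≤ w' i) := by
    intro i
    split_ifs with hi
    · exact le_apply_of_isRep (x := x) (y := y) (mul_comm a b ▸ hR) hwt1 hwt2 hdisj
        (by simpa [N1]) (by omega) (by omega) (by linarith)
    · exact le_apply_of_isRep (x := y) (y := x) hR hwt2 hwt1 hdisj.symm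
        (by simpa [N2] using hi) (by omega) (by omega) (by linarith)
  obtain ⟨U1, hU1, hU1c⟩ := exists_subset_card_eq (by omega : x ≤ #N1)
  obtain ⟨U2, hU2, hU2c⟩ := exists_subset_card_eq (by omega : y ≤ #N2)
  refine ⟨le_quota_of_isRep hR (fun j => ?_) (U := U1 ∪ U2) ?_, hw⟩
  · have := hw j
    split_ifs at this ⊢ <;> assumption
  · rw [sum_union (hdisj.mono hU1 hU2), sum_const_nat fun j hj => hwt1 j (hU1 hj),
      sum_const_nat fun j hj => hwt2 j (hU2 hj), hU1c, hU2c]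
    linarith
end

section
/- Let t ≥ 1 and let a_1 > a_2 > … > a_t > 0 be integers with gcd(a_1, …, a_t) = 1. Let q = ∏_{j=1}^t a_j and let n_1, …, n_t be integers with n_i ≥ 1 + 2·∏_{j ≠ i} a_j for all i. Let χ be the weighted game on n_1 + … + n_t voters represented by [q; w], where w assigns weight a_i to each of the n_i voters of the i-th group. Then this representation is a minimum integer representation of χ: every integer representation [q'; w'] of χ satisfies q' ≥ q and w' v ≥ a_i for every voter v of the i-th group. -/
/-!
Let `[q'; w']` represent the same game, put `q = ∏ a` and `P j = q / a j`, and let `τ j` be the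
mean of `w'` over (a large part of) group `j`: some `k` voters of that part have total weight at
most `k * τ j`, and some `k` have total weight at least `k * τ j`. Since `P j` voters of
group `j` win, `q' * a j ≤ q * τ j`; since `gcd a = 1`, `q - 1 = ∑ d j * a j` for some `d` with
`d j < P j`, and the corresponding losing coalition gives `∑ d j * τ j + 1 ≤ q'`. Combining the two
yields `q ≤ q'`. For a voter `v` of group `i`, the coalition of `v` and `P i - 1` further voters of
group `i` wins; choosing `d` with `P i ≤ a i * d i + 1` makes this force `a i ≤ w' v`.
-/

open Finset BigOperators

namespace Finset

variable {α R : Type*} [DecidableEq α]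

theorem exists_subset_card_eq_card_nsmul_sum_le [AddCommMonoid R] [LinearOrder R]
    [IsOrderedAddMonoid R] (f : α → R) (X : Finset α) {k : ℕ} (hk : k ≤ #X) :
    ∃ B ⊆ X, #B = k ∧ #X • ∑ i ∈ B, f i ≤ k • ∑ i ∈ X, f i := by
  induction X using Finset.strongInduction with
  | H X ih =>
  obtain rfl | hlt := hk.eq_or_lt
  · exact ⟨X, subset_rfl, rfl, le_rfl⟩
  obtain ⟨u, hu, hmax⟩ := X.exists_max_image f (card_pos.mp (k.zero_le.trans_lt hlt))
  have hcard := card_erase_add_one hu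
  obtain ⟨B, hBX, hB, hsum⟩ := ih _ (erase_ssubset hu) (by omega)
  refine ⟨B, hBX.trans (erase_subset _ _), hB, ?_⟩
  have hBu : ∑ i ∈ B, f i ≤ k • f u := by
    simpa [hB] using sum_le_card_nsmul B f (f u) fun i hi => hmax i (mem_of_mem_erase (hBX hi))
  calc #X • ∑ i ∈ B, f i = #(X.erase u) • ∑ i ∈ B, f i + ∑ i ∈ B, f i := by
        rw [← hcard, succ_nsmul]
    _ ≤ k • ∑ i ∈ X.erase u, f i + k • f u := add_le_add hsum hBu
    _ = k • ∑ i ∈ X, f i := by rw [← nsmul_add, sum_erase_add _ _ hu]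

theorem exists_subset_card_eq_nsmul_sum_le_card_nsmul_sum [AddCommMonoid R] [LinearOrder R]
    [IsOrderedAddMonoid R] (f : α → R) (X : Finset α) {k : ℕ} (hk : k ≤ #X) :
    ∃ B ⊆ X, #B = k ∧ k • ∑ i ∈ X, f i ≤ #X • ∑ i ∈ B, f i :=
  exists_subset_card_eq_card_nsmul_sum_le (R := Rᵒᵈ) f X hk

variable [Field R] [LinearOrder R] [IsStrictOrderedRing R]

theorem exists_subset_card_eq_sum_le_mul_expect (f : α → R) (X : Finset α) {k : ℕ}
    (hk : k ≤ #X) : ∃ B ⊆ X, #B = k ∧ ∑ i ∈ B, f i ≤ k * 𝔼 i ∈ X, f i := by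
  obtain ⟨B, hBX, hB, hsum⟩ := exists_subset_card_eq_card_nsmul_sum_le f X hk
  refine ⟨B, hBX, hB, ?_⟩
  rcases X.eq_empty_or_nonempty with rfl | hX
  · simp_all
  rw [expect_eq_sum_div_card, mul_div_assoc', le_div_iff₀ (by simpa using hX.card_pos)]
  simpa [nsmul_eq_mul, mul_comm] using hsum

theorem exists_subset_card_eq_mul_expect_le_sum (f : α → R) (X : Finset α) {k : ℕ}
    (hk : k ≤ #X) : ∃ B ⊆ X, #B = k ∧ k * 𝔼 i ∈ X, f i ≤ ∑ i ∈ B, f i := by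
  obtain ⟨B, hBX, hB, hsum⟩ := exists_subset_card_eq_nsmul_sum_le_card_nsmul_sum f X hk
  refine ⟨B, hBX, hB, ?_⟩
  rcases X.eq_empty_or_nonempty with rfl | hX
  · simp_all
  rw [expect_eq_sum_div_card, mul_div_assoc', div_le_iff₀ (by simpa using hX.card_pos)]
  simpa [nsmul_eq_mul, mul_comm] using hsum

end Finset

namespace Nat

theorem exists_le_lt_add_modEq (N x : ℕ) {m : ℕ} (hm : 0 < m) :
    ∃ c, N ≤ c ∧ c < N + m ∧ c ≡ x [MOD m] := by
  refine ⟨N + (x + (m - N % m)) % m, by omega, by have := mod_lt (x + (m - N % m)) hm; omega, ?_⟩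
  have hN := mod_add_div N m
  have hNm := mod_lt N hm
  calc N + (x + (m - N % m)) % m ≡ N + (x + (m - N % m)) [MOD m] := (mod_modEq _ _).add_left N
    _ = x + m * (N / m + 1) := by rw [mul_add_one]; omega
    _ ≡ x [MOD m] := (modEq_add_modulus_mul_iff.mpr rfl).symm

theorem exists_mul_modEq_of_gcd_dvd {b m n : ℕ} (hm : 0 < m) (h : gcd b m ∣ n) :
    ∃ x, x * b ≡ n [MOD m] := by
  by_cases hlt : gcd b m < m
  · obtain ⟨y, -, hy⟩ := exists_mul_mod_eq_gcd hlt
    obtain ⟨k, rfl⟩ := h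
    refine ⟨y * k, ?_⟩
    have : b * y ≡ gcd b m [MOD m] := by rw [ModEq, hy, mod_eq_of_lt hlt]
    simpa [mul_comm, mul_left_comm, mul_assoc] using this.mul_right k
  · have hgm : gcd b m = m := le_antisymm (gcd_le_right _ hm) (not_lt.mp hlt)
    exact ⟨0, by simpa using (modEq_zero_iff_dvd.mpr (hgm ▸ h)).symm⟩

theorem exists_le_lt_add_mul_modEq (N : ℕ) {b m n : ℕ} (hm : 0 < m) (h : gcd b m ∣ n) :
    ∃ c, N ≤ c ∧ c < N + m ∧ c * b ≡ n [MOD m] := by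
  obtain ⟨x, hx⟩ := exists_mul_modEq_of_gcd_dvd hm h
  obtain ⟨c, hNc, hcN, hc⟩ := exists_le_lt_add_modEq N x hm
  exact ⟨c, hNc, hcN, (hc.mul_right b).trans hx⟩

end Nat

theorem Finset.exists_sum_mul_eq_of_prod_le_add_gcd {ι : Type*} [DecidableEq ι] {a : ι → ℕ}
    (s : Finset ι) (hpos : ∀ j ∈ s, 0 < a j) {n : ℕ} (hdvd : s.gcd a ∣ n)
    (hle : ∏ j ∈ s, a j ≤ n + s.gcd a) : ∃ c : ι → ℕ, ∑ j ∈ s, c j * a j = n := by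
  induction s using Finset.induction_on generalizing n with
  | empty => exact ⟨0, by simpa [eq_comm] using hdvd⟩
  | @insert x s hx ih =>
  rw [gcd_insert] at hdvd hle
  rw [prod_insert hx, mul_comm] at hle
  have hxpos := hpos x (mem_insert_self x s)
  have hpos' : ∀ j ∈ s, 0 < a j := fun j hj => hpos j (mem_insert_of_mem hj)
  rcases s.eq_empty_or_nonempty with rfl | ⟨e, he⟩
  · obtain ⟨k, rfl⟩ : a x ∣ n := by simpa using hdvd
    exact ⟨fun _ => k, by simp [mul_comm]⟩
  have hg'pos : 0 < s.gcd a :=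
    Nat.pos_of_ne_zero fun h0 => (hpos' e he).ne' (gcd_eq_zero_iff.mp h0 e he)
  have hg'Q : s.gcd a ≤ ∏ j ∈ s, a j :=
    Nat.le_of_dvd (prod_pos hpos') ((gcd_dvd he).trans (dvd_prod_of_mem a he))
  have hgx : GCDMonoid.gcd (a x) (s.gcd a) ≤ a x := Nat.le_of_dvd hxpos (Nat.gcd_dvd_left _ _)
  obtain ⟨cx, -, hcx, hmod⟩ := Nat.exists_le_lt_add_mul_modEq 0 hg'pos hdvd
  -- `cx * a x ≤ (s.gcd a - 1) * a x` leaves enough room below `n` for the induction hypothesis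
  have h1 : cx * a x + a x ≤ s.gcd a * a x := by
    simpa [add_one_mul] using Nat.mul_le_mul_right (a x) (show cx + 1 ≤ s.gcd a by omega)
  have h2 : s.gcd a * a x ≤ (∏ j ∈ s, a j) * a x := Nat.mul_le_mul_right _ hg'Q
  have h3 : ∏ j ∈ s, a j - s.gcd a ≤ (∏ j ∈ s, a j) * a x - s.gcd a * a x := by
    simpa [Nat.sub_mul] using Nat.le_mul_of_pos_right (∏ j ∈ s, a j - s.gcd a) hxpos
  have hcxn : cx * a x ≤ n := by omega
  obtain ⟨c, hc⟩ := ih hpos' ((Nat.modEq_iff_dvd' hcxn).mp hmod) (by omega)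
  refine ⟨Function.update c x cx, ?_⟩
  rw [sum_insert hx, Function.update_self,
    sum_congr rfl fun j hj => by rw [Function.update_of_ne (ne_of_mem_of_not_mem hj hx)], hc]
  omega

theorem exists_sum_mul_add_one_eq_prod {ι : Type*} [Fintype ι] [DecidableEq ι] {a : ι → ℕ}
    (hpos : ∀ j, 0 < a j) (hgcd : univ.gcd a = 1) (i : ι) :
    ∃ d : ι → ℕ, ∑ j, d j * a j + 1 = ∏ j, a j ∧ ∏ j ∈ univ.erase i, a j ≤ a i * d i + 1 := by
  rw [← mul_prod_erase _ _ (mem_univ i)]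
  set P := ∏ j ∈ univ.erase i, a j
  have hPpos : 0 < P := prod_pos fun j _ => hpos j
  suffices ∃ R, (∃ c : ι → ℕ, ∑ j ∈ univ.erase i, c j * a j = R) ∧ R + P ≤ a i * P ∧
      R ≡ a i * P - 1 [MOD a i] by
    obtain ⟨R, ⟨c, hc⟩, hRP, hR⟩ := this
    obtain ⟨k, hk⟩ := (Nat.modEq_iff_dvd' (by omega)).mp hR
    refine ⟨Function.update c i k, ?_, ?_⟩
    · rw [← add_sum_erase _ _ (mem_univ i), Function.update_self, sum_congr rfl fun j hj => by
        rw [Function.update_of_ne (ne_of_mem_erase hj)], hc, mul_comm k]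
      omega
    · rw [Function.update_self]
      omega
  by_cases hai : a i = 1
  · exact ⟨0, ⟨0, by simp⟩, by simp [hai], by simp [hai, Nat.modEq_one]⟩
  -- `R` is a multiple of `g = gcd (a j)_{j ≠ i}` in `[P - g, P + (a i - 2) * g]`: the lower end
  -- makes it representable, and the window meets every residue class modulo `a i`, coprime to `g`.
  obtain ⟨g, hg⟩ : ∃ g, (univ.erase i).gcd a = g := ⟨_, rfl⟩
  have hcop : Nat.gcd g (a i) = 1 := by
    rw [← insert_erase (mem_univ i), gcd_insert, hg] at hgcd
    exact Nat.Coprime.symm hgcd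
  obtain ⟨e, he⟩ : (univ.erase i).Nonempty := by
    refine nonempty_iff_ne_empty.mpr fun h => hai ?_
    rw [h, gcd_empty] at hg
    simpa [← hg] using hcop
  obtain ⟨k, hk⟩ : g ∣ P := hg ▸ (gcd_dvd he).trans (dvd_prod_of_mem a he)
  have hk0 : 0 < k := Nat.pos_of_mul_pos_left (hk ▸ hPpos)
  obtain ⟨r, hr, hrk, hmod⟩ :=
    Nat.exists_le_lt_add_mul_modEq (k - 1) (n := a i * P - 1) (hpos i)
      (by rw [hcop]; exact one_dvd _)
  refine ⟨r * g, ?_, ?_, hmod⟩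
  · refine exists_sum_mul_eq_of_prod_le_add_gcd _ (fun j _ => hpos j) (hg ▸ dvd_mul_left g r) ?_
    rw [hg, show ∏ j ∈ univ.erase i, a j = g * k from hk, mul_comm g]
    simpa [add_one_mul] using Nat.mul_le_mul_right g (show k ≤ r + 1 by omega)
  · -- with `P = g * k` and `r ≤ k + a i - 2`, this is `(a i - 2) * g ≤ (a i - 2) * g * k`
    obtain ⟨c, hc⟩ : ∃ c, a i = c + 2 := ⟨a i - 2, by have := hpos i; omega⟩
    have hr' : r * g ≤ (k + c) * g := Nat.mul_le_mul_right g (by omega)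
    have hck : c * g ≤ c * g * k := Nat.le_mul_of_pos_right _ hk0
    rw [hk, hc]
    nlinarith

section OrderedRing

variable {ι R : Type*}

theorem Finset.sum_mul_sub_mul_le_sub [CommRing R] [PartialOrder R] [IsOrderedRing R]
    (s : Finset ι) {a d τ : ι → R} {q q' : R} (hq : 0 ≤ q)
    (hlose : ∑ j ∈ s, d j * τ j + 1 ≤ q') (hsum : ∑ j ∈ s, d j * a j + 1 = q) :
    ∑ j ∈ s, d j * (q * τ j - q' * a j) ≤ q' - q := by
  have hsplit : ∑ j ∈ s, d j * (q * τ j - q' * a j) =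
      q * ∑ j ∈ s, d j * τ j - q' * ∑ j ∈ s, d j * a j := by
    simp only [mul_sum, ← sum_sub_distrib]
    exact sum_congr rfl fun j _ => by ring
  calc _ = q * ∑ j ∈ s, d j * τ j - q' * (q - 1) := by rw [hsplit, eq_sub_of_add_eq hsum]
    _ ≤ q * (q' - 1) - q' * (q - 1) :=
      sub_le_sub_right (mul_le_mul_of_nonneg_left (le_sub_iff_add_le.mpr hlose) hq) _
    _ = q' - q := by ring

theorem le_of_mul_sub_mul_le_sub [CommRing R] [LinearOrder R] [IsStrictOrderedRing R]
    {a w τ P d q q' : R} (ha : 0 < a) (hP : 1 ≤ P) (hq : q = a * P) (hPd : P ≤ a * d + 1)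
    (hd : 0 ≤ d) (hqq' : q ≤ q') (hwin : q' ≤ w + (P - 1) * τ)
    (hslack : d * (q * τ - q' * a) ≤ q' - q) : a ≤ w := by
  subst hq
  rcases hd.eq_or_lt with rfl | hd
  · obtain rfl : P = 1 := le_antisymm (by simpa using hPd) hP
    simp only [sub_self, zero_mul, add_zero, mul_one] at hqq' hwin
    linarith
  have hq0 : 0 < d * (a * P) := mul_pos hd (mul_pos ha (by linarith))
  -- `d * q * (w - a) ≥ (q' - q) * (a * d + 1 - P)`, and the right-hand side is nonnegative
  have key : 0 ≤ d * (a * P) * (w - a) := by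
    nlinarith [mul_le_mul_of_nonneg_left hwin hq0.le,
      mul_le_mul_of_nonneg_left hslack (sub_nonneg.mpr hP),
      mul_nonneg (sub_nonneg.mpr hqq') (show 0 ≤ a * d + 1 - P by linarith)]
  exact sub_nonneg.mp (nonneg_of_mul_nonneg_right (by linarith) hq0)

end OrderedRing

def SameWeightedGame {V : Type*} (q : ℕ) (w : V → ℕ) (q' : ℕ) (w' : V → ℕ) : Prop :=
  ∀ U : Finset V, q ≤ ∑ v ∈ U, w v ↔ q' ≤ ∑ v ∈ U, w' v

namespace SameWeightedGame

variable {V ι : Type*} [DecidableEq V] {σ : V → ι} {a : ι → ℕ} {q q' : ℕ} {w' : V → ℕ}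

theorem le_sum_add_mul_expect (H : SameWeightedGame q (fun v => a (σ v)) q' w')
    {Y X : Finset V} (hYX : Disjoint Y X) {j : ι} (hX : ∀ v ∈ X, σ v = j) {k : ℕ}
    (hk : k ≤ #X) (hwin : q ≤ ∑ v ∈ Y, a (σ v) + k * a j) :
    (q' : ℚ) ≤ ∑ v ∈ Y, (w' v : ℚ) + k * 𝔼 v ∈ X, (w' v : ℚ) := by
  obtain ⟨B, hBX, hB, hBsum⟩ := X.exists_subset_card_eq_sum_le_mul_expect (fun v => (w' v : ℚ)) hk
  have hdisj : Disjoint Y B := hYX.mono_right hBX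
  have hBa : ∑ v ∈ B, a (σ v) = k * a j := by
    rw [sum_const_nat fun v hv => by rw [hX v (hBX hv)], hB]
  have hq' : q' ≤ ∑ v ∈ Y ∪ B, w' v := (H _).mp (by rwa [sum_union hdisj, hBa])
  rw [sum_union hdisj] at hq'
  calc (q' : ℚ) ≤ ∑ v ∈ Y, (w' v : ℚ) + ∑ v ∈ B, (w' v : ℚ) := by exact_mod_cast hq'
    _ ≤ _ := by gcongr

theorem sum_mul_expect_add_one_le [Fintype ι] (H : SameWeightedGame q (fun v => a (σ v)) q' w')
    (X : ι → Finset V) (hX : ∀ j, ∀ v ∈ X j, σ v = j) (d : ι → ℕ) (hd : ∀ j, d j ≤ #(X j))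
    (hlose : ∑ j, d j * a j < q) :
    ∑ j, (d j : ℚ) * 𝔼 v ∈ X j, (w' v : ℚ) + 1 ≤ q' := by
  choose B hBX hB hBsum using fun j =>
    (X j).exists_subset_card_eq_mul_expect_le_sum (fun v => (w' v : ℚ)) (hd j)
  have hdisj : ((univ : Finset ι) : Set ι).PairwiseDisjoint B := fun i _ j _ hij =>
    disjoint_left.mpr fun v hi hj => hij ((hX i v (hBX i hi)).symm.trans (hX j v (hBX j hj)))
  have hBa : ∑ v ∈ univ.biUnion B, a (σ v) = ∑ j, d j * a j := by
    rw [sum_biUnion hdisj]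
    exact sum_congr rfl fun j _ => by
      rw [sum_const_nat fun v hv => by rw [hX j v (hBX j hv)], hB]
  have hq' : ∑ j, ∑ v ∈ B j, w' v + 1 ≤ q' := by
    rw [← sum_biUnion hdisj]
    exact Nat.succ_le_of_lt (not_le.mp fun h => (hBa ▸ hlose).not_ge ((H _).mpr h))
  calc ∑ j, (d j : ℚ) * 𝔼 v ∈ X j, (w' v : ℚ) + 1 ≤ ∑ j, ∑ v ∈ B j, (w' v : ℚ) + 1 := by
        gcongr with j
        exact hBsum j
    _ ≤ q' := by exact_mod_cast hq'

variable [Fintype ι] [DecidableEq ι]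

theorem prod_le_and_mul_sub_le (H : SameWeightedGame (∏ j, a j) (fun v => a (σ v)) q' w')
    (X : ι → Finset V) (hX : ∀ j, ∀ v ∈ X j, σ v = j)
    (hPX : ∀ j, ∏ k ∈ univ.erase j, a k ≤ #(X j)) (d : ι → ℕ)
    (hd : ∑ j, d j * a j + 1 = ∏ j, a j) :
    ∏ j, a j ≤ q' ∧ ∀ i, (d i : ℚ) * ((∏ j, a j : ℕ) * 𝔼 v ∈ X i, (w' v : ℚ) - q' * a i) ≤
      q' - (∏ j, a j : ℕ) := by
  set q := ∏ j, a j
  have hP : ∀ j, (∏ k ∈ univ.erase j, a k) * a j = q := fun j => by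
    rw [mul_comm, mul_prod_erase _ _ (mem_univ j)]
  have hwin : ∀ j, (q' : ℚ) * a j ≤ q * 𝔼 v ∈ X j, (w' v : ℚ) := fun j => by
    have h := H.le_sum_add_mul_expect (disjoint_empty_left _) (hX j) (hPX j) (by simp [hP j])
    rw [sum_empty, zero_add] at h
    calc (q' : ℚ) * a j ≤ (∏ k ∈ univ.erase j, a k : ℕ) * (𝔼 v ∈ X j, (w' v : ℚ)) * a j :=
          mul_le_mul_of_nonneg_right h (Nat.cast_nonneg _)
      _ = _ := by rw [← hP j, Nat.cast_mul]; ring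
  have hdX : ∀ j, d j ≤ #(X j) := fun j => by
    have hj : d j * a j ≤ ∑ j, d j * a j :=
      single_le_sum (f := fun j => d j * a j) (fun j _ => Nat.zero_le _) (mem_univ j)
    have h : d j * a j < (∏ k ∈ univ.erase j, a k) * a j := by rw [hP j]; omega
    exact (Nat.lt_of_mul_lt_mul_right h).le.trans (hPX j)
  have hlose := H.sum_mul_expect_add_one_le X hX d hdX (by omega)
  have hslack := sum_mul_sub_mul_le_sub univ (a := fun j => (a j : ℚ)) (q := q) (q' := q')
    (Nat.cast_nonneg _) hlose (by exact_mod_cast hd)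
  have hterm : ∀ j, 0 ≤ (d j : ℚ) * (q * 𝔼 v ∈ X j, (w' v : ℚ) - q' * a j) :=
    fun j => mul_nonneg (Nat.cast_nonneg _) (sub_nonneg.mpr (hwin j))
  exact ⟨by exact_mod_cast sub_nonneg.mp ((sum_nonneg fun j _ => hterm j).trans hslack),
    fun i => (single_le_sum (fun j _ => hterm j) (mem_univ i)).trans hslack⟩

theorem prod_le (H : SameWeightedGame (∏ j, a j) (fun v => a (σ v)) q' w')
    (hpos : ∀ j, 0 < a j) (hgcd : univ.gcd a = 1) (X : ι → Finset V)
    (hX : ∀ j, ∀ v ∈ X j, σ v = j) (hPX : ∀ j, ∏ k ∈ univ.erase j, a k ≤ #(X j)) :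
    ∏ j, a j ≤ q' := by
  have hq : 0 < ∏ j, a j := prod_pos fun j _ => hpos j
  obtain ⟨d, hd⟩ := exists_sum_mul_eq_of_prod_le_add_gcd univ (fun j _ => hpos j)
    (n := ∏ j, a j - 1) (by simp [hgcd]) (by rw [hgcd]; omega)
  exact (H.prod_le_and_mul_sub_le X hX hPX d (by omega)).1

theorem le_weight (H : SameWeightedGame (∏ j, a j) (fun v => a (σ v)) q' w')
    (hpos : ∀ j, 0 < a j) (hgcd : univ.gcd a = 1) (G : ι → Finset V)
    (hG : ∀ j, ∀ v ∈ G j, σ v = j) (hGcard : ∀ j, ∏ k ∈ univ.erase j, a k < #(G j)) (v : V) :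
    a (σ v) ≤ w' v := by
  have hX : ∀ j, ∀ u ∈ (G j).erase v, σ u = j := fun j u hu => hG j u (mem_of_mem_erase hu)
  have hPX : ∀ j, ∏ k ∈ univ.erase j, a k ≤ #((G j).erase v) := fun j => by
    have := hGcard j
    have := pred_card_le_card_erase (s := G j) (a := v)
    omega
  obtain ⟨d, hd, hPd⟩ := exists_sum_mul_add_one_eq_prod hpos hgcd (σ v)
  obtain ⟨hqq', hslack⟩ := H.prod_le_and_mul_sub_le _ hX hPX d hd
  have hq := mul_prod_erase univ a (mem_univ (σ v))
  have hP : 0 < ∏ k ∈ univ.erase (σ v), a k := prod_pos fun j _ => hpos j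
  have hwin := H.le_sum_add_mul_expect (disjoint_singleton_left.mpr (notMem_erase v _))
    (hX (σ v)) (k := ∏ k ∈ univ.erase (σ v), a k - 1) (by have := hPX (σ v); omega) (by
      rw [sum_singleton, ← hq]
      nlinarith [Nat.sub_add_cancel hP])
  rw [sum_singleton, Nat.cast_sub hP, Nat.cast_one] at hwin
  exact_mod_cast le_of_mul_sub_mul_le_sub (by exact_mod_cast hpos (σ v))
    (Nat.one_le_cast.mpr hP) (by rw [← hq]; push_cast; rfl) (by exact_mod_cast hPd)
    (Nat.cast_nonneg _) (by exact_mod_cast hqq') hwin (hslack (σ v))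

end SameWeightedGame

theorem stmt10_general (t : ℕ) (a : Fin t → ℕ) (hpos : ∀ i, 0 < a i)
    (hgcd : Finset.univ.gcd a = 1)
    (m : Fin t → ℕ) (hm : ∀ i : Fin t, 1 + 2 * ∏ j ∈ Finset.univ.erase i, a j ≤ m i) :
    ∀ (q' : ℕ) (w' : ((i : Fin t) × Fin (m i)) → ℕ),
      (∀ U : Finset ((i : Fin t) × Fin (m i)),
        ((∏ j, a j) ≤ ∑ v ∈ U, a v.1) ↔ q' ≤ ∑ v ∈ U, w' v) →
      (∏ j, a j) ≤ q' ∧ ∀ v : (i : Fin t) × Fin (m i), a v.1 ≤ w' v := by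
  intro q' w' H
  let G : (j : Fin t) → Finset ((i : Fin t) × Fin (m i)) :=
    fun j => univ.map (Function.Embedding.sigmaMk j)
  have hG : ∀ j, ∀ v ∈ G j, v.1 = j := by
    rintro j v hv
    obtain ⟨k, -, rfl⟩ := mem_map.mp hv
    rfl
  have hGcard : ∀ j, ∏ k ∈ univ.erase j, a k < #(G j) := fun j => by
    simp only [G, card_map, card_univ, Fintype.card_fin]
    have := hm j
    omega
  exact ⟨SameWeightedGame.prod_le H hpos hgcd G hG fun j => (hGcard j).le,
    SameWeightedGame.le_weight H hpos hgcd G hG hGcard⟩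

theorem stmt10 (t : ℕ) (ht : 1 ≤ t) (a : Fin t → ℕ) (hpos : ∀ i, 0 < a i)
    (hdec : ∀ i j : Fin t, i < j → a j < a i)
    (hgcd : Finset.univ.gcd a = 1)
    (m : Fin t → ℕ) (hm : ∀ i : Fin t, 1 + 2 * ∏ j ∈ Finset.univ.erase i, a j ≤ m i) :
    ∀ (q' : ℕ) (w' : ((i : Fin t) × Fin (m i)) → ℕ),
      (∀ U : Finset ((i : Fin t) × Fin (m i)),
        ((∏ j, a j) ≤ ∑ v ∈ U, a v.1) ↔ q' ≤ ∑ v ∈ U, w' v) →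
      (∏ j, a j) ≤ q' ∧ ∀ v : (i : Fin t) × Fin (m i), a v.1 ≤ w' v :=
  stmt10_general t a hpos hgcd m hm
end

section
/- Let a > b > 3 be coprime positive integers, let t ≥ 2, and let l_1 < l_2 < … < l_t be natural numbers such that, setting ŵ_i = a·b − l_i − 1 for 1 ≤ i ≤ t: (1) a < ŵ_i < a·b − 1, l_i is not representable by a and b, and l_i + 1 is representable by a and b, for all i; (2) for every z with 2 ≤ z < t and every subset {i_1, …, i_z} ⊆ {1, …, t} of cardinality z, 0 < l_{i_1} + … + l_{i_z} − (z − 1)·a·b < a·b and l_{i_1} + … + l_{i_z} − (z − 1)·a·b is not representable by a and b; (3) 0 < l_1 + … + l_t + 1 − (t − 1)·a·b < a·b and l_1 + … + l_t + 1 − (t − 1)·a·b is representable by a and b. Let χ be the weighted game on t + b + a voters represented by [a·b; ŵ1, ŵ2 + 1, …, ŵt + 1, a, …, a (a group A of b voters), b, …, b (a group B of a voters)]. Then for each k ∈ {1, …, t} the vector [a·b; ŵ1 + 1, …, ŵ_{k−1} + 1, ŵ_k, ŵ_{k+1} + 1, …, ŵ_t + 1, a, …, a, b, …, b] is an integer representation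 of χ, and every integer representation [q'; w1, …, wt, w_A on A, w_B on B] of χ that is constant on A and on B satisfies w_A ≥ a, w_B ≥ b, w_i ≥ ŵ_i for all i, and w1 + … + wt ≥ ŵ1 + … + ŵt + (t − 1); hence each of the t listed vectors attains the minimum possible total weight among such group-constant integer representations of χ. -/
/-!
Moving the unit of weight between two individual voters changes the weight of a coalition
only if the coalition contains exactly one of them, and this changes the outcome only if the
coalition has weight exactly `a b` under `[ŵ₁ + 1, …, ŵₜ + 1, a, …, a, b, …, b]`. For a
coalition with individual voters `S`, `1 ≤ |S| < t`, and `p` members of `A` and `r` of `B`,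
this would make `∑_{i ∈ S} lᵢ - (|S| - 1) a b = p a + r b` representable, which (1) and (2)
exclude.

For the lower bounds take `x a = y b + 1` with `0 < x < b`. The groups `A` and `B` win on their
own, while `b - x` members of `A` with `y` members of `B` lose (weight `a b - 1`). This puts
`(w_A - a, w_B - b)` in a cone on which the lattice point `(b - x, y)` maximises
`p (w_A - a) + r (w_B - b)` over all `p a + r b < a b`, so every winning coalition made of
individual voters `S`, `p` members of `A` and `r` of `B` with `p a + r b < a b` yields
`a b ≤ ∑_{i ∈ S} wᵢ + p a + r b`. Taking `S = {k}` with `p a + r b = l_k + 1`, and all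
individual voters with `p a + r b = l₁ + ⋯ + lₜ + 1 - (t - 1) a b`, gives the bounds on the
`wᵢ`.
-/

open Finset

theorem Nat.exists_mul_eq_mul_add_one_of_coprime {a b : ℕ} (hco : a.Coprime b) (hb : 1 < b) :
    ∃ x y : ℕ, 0 < x ∧ x < b ∧ x * a = y * b + 1 := by
  obtain ⟨x, hxb, hx⟩ := Nat.exists_mul_mod_eq_one_of_coprime hco hb
  refine ⟨x, a * x / b, Nat.pos_of_ne_zero ?_, hxb, ?_⟩
  · rintro rfl
    simp at hx
  · have := Nat.div_add_mod (a * x) b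
    rw [hx] at this
    linarith

theorem sum_tsub_add_sum_eq_card_mul {ι : Type*} {c : ℕ} {l : ι → ℕ} {S : Finset ι}
    (hl : ∀ i ∈ S, l i ≤ c) : ∑ i ∈ S, (c - l i) + ∑ i ∈ S, l i = #S * c := by
  rw [← sum_add_distrib, sum_congr rfl fun i hi => Nat.sub_add_cancel (hl i hi), sum_const,
    smul_eq_mul]

def excess {ι : Type*} (c : ℕ) (l : ι → ℕ) (S : Finset ι) : ℕ :=
  ∑ i ∈ S, l i - (#S - 1) * c

theorem excess_singleton {ι : Type*} (c : ℕ) (l : ι → ℕ) (i : ι) :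
    excess c l {i} = l i := by
  simp [excess]

theorem excess_eq_of_sum_tsub_add_eq {ι : Type*} {c k : ℕ} {l : ι → ℕ} {S : Finset ι}
    (hS : S.Nonempty) (hl : ∀ i ∈ S, l i ≤ c) (h : ∑ i ∈ S, (c - l i) + k = c) :
    excess c l S = k := by
  have hsum := sum_tsub_add_sum_eq_card_mul hl
  have hcard : (#S - 1) * c + c = #S * c := by
    rw [← add_one_mul, Nat.sub_one_add_one hS.card_pos.ne']
  unfold excess
  omega

section Lattice

variable {a b x y dA dB : ℤ}

theorem nonneg_of_cone (hxy : x * a = y * b + 1) (hx : 0 ≤ x) (hxb : x ≤ b) (hy : 0 ≤ y)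
    (hya : y ≤ a) (h₁ : y * dB ≤ x * dA) (h₂ : (b - x) * dA ≤ (a - y) * dB) :
    0 ≤ dA ∧ 0 ≤ dB :=
  ⟨by nlinarith [mul_le_mul_of_nonneg_left h₁ (sub_nonneg.mpr hya),
      mul_le_mul_of_nonneg_left h₂ hy],
    by nlinarith [mul_le_mul_of_nonneg_left h₁ (sub_nonneg.mpr hxb),
      mul_le_mul_of_nonneg_left h₂ hx]⟩

theorem nonneg_of_cone_of_neg {G H : ℤ} (hb : 0 < b) (hx : 0 < x) (hy : 0 ≤ y)
    (hxy : x * a = y * b + 1) (hcone : y * dB ≤ x * dA) (hdB : 0 ≤ dB) (hGb : G ≤ b - x)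
    (hH : H < 0) (hN : 0 ≤ G * a + H * b) : 0 ≤ G * dA + H * dB := by
  have ha : 0 < a := by nlinarith
  have hG : 0 ≤ G := by nlinarith
  -- `G < b` and `0 ≤ G * a + H * b` make the right-hand side of `hb'` larger than `-b`
  have hGH : 0 ≤ G * y + H * x := by
    have hb' : b * (G * y + H * x) = x * (G * a + H * b) - G := by linear_combination -G * hxy
    nlinarith
  have : 0 ≤ x * (G * dA + H * dB) := by
    nlinarith [mul_le_mul_of_nonneg_left hcone hG, mul_nonneg hdB hGH]
  exact (mul_nonneg_iff_of_pos_left hx).mp this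

/-- `(b - x, y)` is the lattice point on the line `p a + r b = a b - 1`; `h₁` and `h₂` say that
`p dA + r dB` is no larger there than at `(b, 0)` and at `(0, a)`. -/
theorem le_of_cone (hx : 0 < x) (hxb : x < b) (hy : 0 ≤ y) (hxy : x * a = y * b + 1)
    (h₁ : y * dB ≤ x * dA) (h₂ : (b - x) * dA ≤ (a - y) * dB) {p r : ℤ} (hp : 0 ≤ p)
    (hr : 0 ≤ r) (hpr : p * a + r * b < a * b) :
    p * dA + r * dB ≤ (b - x) * dA + y * dB := by
  have hya : y < a := by nlinarith
  have hxy' : (a - y) * b = (b - x) * a + 1 := by linear_combination hxy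
  obtain ⟨hdA, hdB⟩ := nonneg_of_cone hxy hx.le hxb.le hy hya.le h₁ h₂
  have hN : 0 ≤ (b - x - p) * a + (y - r) * b := by linarith
  rcases lt_or_ge (y - r) 0 with hH | hH
  · linarith [nonneg_of_cone_of_neg (by linarith) hx hy hxy h₁ hdB (by linarith) hH hN]
  rcases lt_or_ge (b - x - p) 0 with hG | hG
  · linarith [nonneg_of_cone_of_neg (G := y - r) (by linarith) (by linarith) (by linarith) hxy'
      h₂ hdA (by linarith) hG (by rwa [add_comm])]
  linarith [mul_nonneg hG hdA, mul_nonneg hH hdB]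

end Lattice

theorem le_and_add_le_of_quota {a b x y wA wB q : ℕ} (hx : 0 < x) (hxb : x < b)
    (hxy : x * a = y * b + 1) (hA : q ≤ b * wA) (hB : q ≤ a * wB)
    (hL : (b - x) * wA + y * wB < q) :
    a ≤ wA ∧ b ≤ wB ∧
      ∀ p r : ℕ, p * a + r * b < a * b → p * wA + r * wB + a * b ≤ q + (p * a + r * b) := by
  zify [hxb.le] at hxy hA hB hL ⊢
  have h₁ : (y : ℤ) * (wB - b) ≤ x * (wA - a) := by linarith
  have h₂ : ((b : ℤ) - x) * (wA - a) ≤ (a - y) * (wB - b) := by linarith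
  obtain ⟨hdA, hdB⟩ :=
    nonneg_of_cone hxy (by positivity) (by omega) (by positivity) (by nlinarith) h₁ h₂
  refine ⟨by linarith, by linarith, fun p r hpr => ?_⟩
  have := le_of_cone (by exact_mod_cast hx) (by exact_mod_cast hxb) (by positivity) hxy h₁ h₂
    (by positivity : (0 : ℤ) ≤ p) (by positivity : (0 : ℤ) ≤ r) hpr
  linarith

section Blocks

variable {t m n : ℕ}

def indiv (j : Fin t) : Fin (t + m + n) := Fin.castAdd n (Fin.castAdd m j)

def memberA (j : Fin m) : Fin (t + m + n) := Fin.castAdd n (Fin.natAdd t j)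

def memberB (j : Fin n) : Fin (t + m + n) := Fin.natAdd (t + m) j

theorem sum_eq_blocks (U : Finset (Fin (t + m + n))) (f : Fin (t + m + n) → ℕ) {cA cB : ℕ}
    (hA : ∀ j, f (memberA j) = cA) (hB : ∀ j, f (memberB j) = cB) :
    ∑ i ∈ U, f i = ∑ j ∈ {j | indiv j ∈ U}, f (indiv j) + #{j | memberA j ∈ U} * cA +
      #{j | memberB j ∈ U} * cB := by
  rw [← Fintype.sum_ite_mem, Fin.sum_univ_add, Fin.sum_univ_add]
  change ∑ j, (if indiv j ∈ U then f (indiv j) else 0) +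
    ∑ j, (if memberA j ∈ U then f (memberA j) else 0) +
    ∑ j, (if memberB j ∈ U then f (memberB j) else 0) = _
  simp only [hA, hB, ← sum_filter, sum_const, smul_eq_mul]

theorem forall_memberA_iff {P : Fin (t + m + n) → Prop} :
    (∀ j, P (memberA j)) ↔
      ∀ i : Fin (t + m + n), t ≤ (i : ℕ) → (i : ℕ) < t + m → P i := by
  refine ⟨fun h i hi hi' => ?_, fun h j => h _ (by simp [memberA]) (by simp [memberA])⟩
  have : memberA ⟨i - t, by omega⟩ = i := Fin.ext (by simp [memberA]; omega)
  exact this ▸ h _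

theorem forall_memberB_iff {P : Fin (t + m + n) → Prop} :
    (∀ j, P (memberB j)) ↔ ∀ i : Fin (t + m + n), t + m ≤ (i : ℕ) → P i := by
  refine ⟨fun h i hi => ?_, fun h j => h _ (by simp [memberB])⟩
  have : memberB ⟨i - (t + m), by omega⟩ = i := Fin.ext (by simp [memberB]; omega)
  exact this ▸ h _

open Classical in
noncomputable def coalition (S : Finset (Fin t)) (α β : ℕ) : Finset (Fin (t + m + n)) :=
  {i | Fin.addCases (Fin.addCases (· ∈ S) (fun j => (j : ℕ) < α)) (fun j => (j : ℕ) < β) i}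

@[simp] theorem indiv_mem_coalition {S : Finset (Fin t)} {α β : ℕ} {j : Fin t} :
    indiv j ∈ (coalition S α β : Finset (Fin (t + m + n))) ↔ j ∈ S := by
  simp [coalition, indiv]

@[simp] theorem memberA_mem_coalition {S : Finset (Fin t)} {α β : ℕ} {j : Fin m} :
    memberA j ∈ (coalition S α β : Finset (Fin (t + m + n))) ↔ (j : ℕ) < α := by
  simp [coalition, memberA]

@[simp] theorem memberB_mem_coalition {S : Finset (Fin t)} {α β : ℕ} {j : Fin n} :
    memberB j ∈ (coalition S α β : Finset (Fin (t + m + n))) ↔ (j : ℕ) < β := by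
  simp [coalition, memberB]

theorem sum_coalition (S : Finset (Fin t)) {α β : ℕ} (hα : α ≤ m) (hβ : β ≤ n)
    (f : Fin (t + m + n) → ℕ) {cA cB : ℕ}
    (hA : ∀ j, f (memberA j) = cA) (hB : ∀ j, f (memberB j) = cB) :
    ∑ i ∈ coalition S α β, f i = ∑ j ∈ S, f (indiv j) + α * cA + β * cB := by
  rw [sum_eq_blocks _ f hA hB]
  simp [Fin.card_filter_val_lt, hα, hβ]

end Blocks

section Wvec

variable {t a b : ℕ}

theorem Wvec_memberA (l : Fin t → ℕ) (k : Fin t) (j : Fin b) :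
    Wvec t a b l k (memberA j) = a := by
  simp [Wvec, memberA]

theorem Wvec_memberB (l : Fin t → ℕ) (k : Fin t) (j : Fin a) :
    Wvec t a b l k (memberB j) = b := by
  simp [Wvec, memberB, add_assoc]

theorem Wvec_indiv (l : Fin t → ℕ) (k j : Fin t) :
    Wvec t a b l k (indiv j) = a * b - l j - 1 + if j = k then 0 else 1 := by
  simp [Wvec, indiv, Fin.val_inj]

theorem sum_Wvec_indiv_add {l : Fin t → ℕ} (hl : ∀ j, l j < a * b) (k : Fin t)
    (S : Finset (Fin t)) :
    ∑ j ∈ S, Wvec t a b l k (indiv j) + (if k ∈ S then 1 else 0) =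
      ∑ j ∈ S, (a * b - l j) := by
  rw [← sum_ite_eq' S k fun _ => 1, ← sum_add_distrib]
  refine sum_congr rfl fun j _ => ?_
  rw [Wvec_indiv]
  have := hl j
  split_ifs <;> omega

theorem sum_Wvec_indiv_univ {l : Fin t → ℕ} (hl : ∀ j, l j < a * b) (k : Fin t) :
    ∑ j, Wvec t a b l k (indiv j) = ∑ j, (a * b - l j - 1) + (t - 1) := by
  have h := sum_Wvec_indiv_add hl k univ
  have hsum : ∑ j, (a * b - l j - 1) + t = ∑ j, (a * b - l j) :=
    calc ∑ j, (a * b - l j - 1) + t = ∑ j, (a * b - l j - 1 + 1) := by simp [sum_add_distrib]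
      _ = ∑ j, (a * b - l j) := sum_congr rfl fun j _ => by have := hl j; omega
  rw [if_pos (mem_univ k)] at h
  have := k.pos
  omega

end Wvec

section Game

variable {t a b : ℕ} {l : Fin t → ℕ}

theorem sum_Wvec_add_ite (hl : ∀ j, l j < a * b) (k : Fin t) (U : Finset (Fin (t + b + a))) :
    ∑ i ∈ U, Wvec t a b l k i + (if indiv k ∈ U then 1 else 0) =
      ∑ j ∈ {j | indiv j ∈ U}, (a * b - l j) + (#{j | memberA j ∈ U} * a +
        #{j | memberB j ∈ U} * b) := by
  rw [sum_eq_blocks U _ (Wvec_memberA l k) (Wvec_memberB l k), ← sum_Wvec_indiv_add hl k]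
  simp only [mem_filter, mem_univ, true_and]
  ring

theorem sum_tsub_add_ne (hl : ∀ j, l j < a * b)
    (hex : ∀ S : Finset (Fin t), S.Nonempty → #S < t → ¬ Repre a b (excess (a * b) l S))
    {S : Finset (Fin t)} (hS : S.Nonempty) (hSt : #S < t) (α β : ℕ) :
    ∑ j ∈ S, (a * b - l j) + (α * a + β * b) ≠ a * b := fun h =>
  hex S hS hSt ⟨α, β, (excess_eq_of_sum_tsub_add_eq hS (fun j _ => (hl j).le) h).symm⟩

theorem le_sum_Wvec_iff (hl : ∀ j, l j < a * b)
    (hex : ∀ S : Finset (Fin t), S.Nonempty → #S < t → ¬ Repre a b (excess (a * b) l S))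
    (k k' : Fin t) (U : Finset (Fin (t + b + a))) :
    a * b ≤ ∑ i ∈ U, Wvec t a b l k i ↔ a * b ≤ ∑ i ∈ U, Wvec t a b l k' i := by
  have hk := sum_Wvec_add_ite hl k U
  have hk' := sum_Wvec_add_ite hl k' U
  have hne : ∀ j j', indiv j ∈ U → indiv j' ∉ U →
      ∑ j ∈ {j | indiv j ∈ U}, (a * b - l j) +
        (#{j | memberA j ∈ U} * a + #{j | memberB j ∈ U} * b) ≠ a * b := fun j j' hj hj' =>
    sum_tsub_add_ne hl hex ⟨j, by simpa using hj⟩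
      (by simpa using card_lt_univ_of_notMem (s := {j | indiv j ∈ U}) (by simpa using hj')) _ _
  by_cases hkU : indiv k ∈ U <;> by_cases hk'U : indiv k' ∈ U <;>
    simp only [hkU, hk'U, if_true, if_false] at hk hk'
  · omega
  · have := hne k k' hkU hk'U
    omega
  · have := hne k' k hk'U hkU
    omega
  · omega

end Game

section Representation

def wvecGame (t a b : ℕ) (l : Fin t → ℕ) (k₀ : Fin t) (U : Finset (Fin (t + b + a))) :
    Prop :=
  a * b ≤ ∑ i ∈ U, Wvec t a b l k₀ i

variable {t a b : ℕ} {l : Fin t → ℕ} {k₀ : Fin t} {q : ℕ} {w : Fin (t + b + a) → ℕ}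
  {wA wB : ℕ}

theorem quota_le_iff_of_isRep (hrep : IsRep (wvecGame t a b l k₀) q w)
    (hA : ∀ j, w (memberA j) = wA) (hB : ∀ j, w (memberB j) = wB)
    (S : Finset (Fin t)) {α β : ℕ} (hα : α ≤ b) (hβ : β ≤ a) :
    a * b ≤ ∑ j ∈ S, Wvec t a b l k₀ (indiv j) + α * a + β * b ↔
      q ≤ ∑ j ∈ S, w (indiv j) + α * wA + β * wB := by
  rw [← sum_coalition S hα hβ _ (Wvec_memberA l k₀) (Wvec_memberB l k₀),
    ← sum_coalition S hα hβ w hA hB]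
  exact hrep _

theorem le_and_add_le_of_isRep (hco : a.Coprime b) (hb : 1 < b)
    (hrep : IsRep (wvecGame t a b l k₀) q w)
    (hA : ∀ j, w (memberA j) = wA) (hB : ∀ j, w (memberB j) = wB) :
    a ≤ wA ∧ b ≤ wB ∧
      ∀ p r : ℕ, p * a + r * b < a * b → p * wA + r * wB + a * b ≤ q + (p * a + r * b) := by
  obtain ⟨x, y, hx, hxb, hxy⟩ := Nat.exists_mul_eq_mul_add_one_of_coprime hco hb
  have hya : y ≤ a := by nlinarith
  have hsplit : (b - x) * a + x * a = a * b := by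
    rw [← add_mul, Nat.sub_add_cancel hxb.le, mul_comm]
  have hA_wins :=
    (quota_le_iff_of_isRep hrep hA hB ∅ le_rfl (Nat.zero_le a)).mp (by simp [mul_comm])
  have hB_wins := (quota_le_iff_of_isRep hrep hA hB ∅ (Nat.zero_le b) le_rfl).mp (by simp)
  have hloses :=
    (quota_le_iff_of_isRep hrep hA hB ∅ (Nat.sub_le b x) hya).not.mp (by simp; omega)
  simp only [sum_empty, zero_add, zero_mul, add_zero, not_le] at hA_wins hB_wins hloses
  exact le_and_add_le_of_quota hx hxb hxy hA_wins hB_wins hloses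

theorem le_sum_weight_indiv_add (hco : a.Coprime b) (hb : 1 < b)
    (hrep : IsRep (wvecGame t a b l k₀) q w)
    (hA : ∀ j, w (memberA j) = wA) (hB : ∀ j, w (memberB j) = wB)
    (S : Finset (Fin t)) {u v : ℕ} (huv : u * a + v * b < a * b)
    (hwins : a * b ≤ ∑ j ∈ S, Wvec t a b l k₀ (indiv j) + (u * a + v * b)) :
    a * b ≤ ∑ j ∈ S, w (indiv j) + (u * a + v * b) := by
  have hu : u ≤ b := by nlinarith
  have hv : v ≤ a := by nlinarith
  have hq := (quota_le_iff_of_isRep hrep hA hB S hu hv).mp (by omega)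
  have := (le_and_add_le_of_isRep hco hb hrep hA hB).2.2 u v huv
  omega

theorem le_weight_indiv (hco : a.Coprime b) (hb : 1 < b)
    (hrep : IsRep (wvecGame t a b l k₀) q w)
    (hA : ∀ j, w (memberA j) = wA) (hB : ∀ j, w (memberB j) = wB)
    {j : Fin t} (hlj : l j + 1 < a * b) (hrepr : Repre a b (l j + 1)) :
    a * b - l j - 1 ≤ w (indiv j) := by
  obtain ⟨u, v, huv⟩ := hrepr
  have := le_sum_weight_indiv_add hco hb hrep hA hB {j} (huv ▸ hlj) (by
    rw [sum_singleton, Wvec_indiv]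
    omega)
  rw [sum_singleton] at this
  omega

theorem sum_le_sum_weight_indiv (hco : a.Coprime b) (hb : 1 < b) (hl : ∀ j, l j < a * b)
    (hrep : IsRep (wvecGame t a b l k₀) q w)
    (hA : ∀ j, w (memberA j) = wA) (hB : ∀ j, w (memberB j) = wB)
    (hlo : (t - 1) * (a * b) < (∑ j, l j) + 1) (hhi : (∑ j, l j) + 1 < t * (a * b))
    (hrepr : Repre a b ((∑ j, l j) + 1 - (t - 1) * (a * b))) :
    ∑ j, (a * b - l j - 1) + (t - 1) ≤ ∑ j, w (indiv j) := by
  obtain ⟨u, v, huv⟩ := hrepr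
  have ht := k₀.pos
  have htm : (t - 1) * (a * b) + a * b = t * (a * b) := by
    rw [← add_one_mul, Nat.sub_one_add_one ht.ne']
  have hsum : ∑ j, (a * b - l j - 1) + ((∑ j, l j) + t) = t * (a * b) := by
    simpa [Nat.sub_sub, sum_add_distrib] using
      sum_tsub_add_sum_eq_card_mul (S := univ) (l := fun j => l j + 1) fun j _ => hl j
  have := le_sum_weight_indiv_add hco hb hrep hA hB univ (u := u) (v := v) (by omega) (by
    rw [sum_Wvec_indiv_univ hl]
    omega)
  omega

theorem sum_Wvec_le_sum (hl : ∀ j, l j < a * b) (k : Fin t)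
    (hA : ∀ j, w (memberA j) = wA) (hB : ∀ j, w (memberB j) = wB)
    (hwA : a ≤ wA) (hwB : b ≤ wB)
    (hindiv : ∑ j, (a * b - l j - 1) + (t - 1) ≤ ∑ j, w (indiv j)) :
    ∑ i, Wvec t a b l k i ≤ ∑ i, w i := by
  rw [sum_eq_blocks univ _ (Wvec_memberA l k) (Wvec_memberB l k), sum_eq_blocks univ w hA hB]
  simp only [mem_univ, filter_true, card_univ, Fintype.card_fin]
  rw [sum_Wvec_indiv_univ hl]
  gcongr

end Representation

theorem stmt13 (a b t : ℕ) (hb3 : 3 < b) (hco : Nat.Coprime a b)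
    (ht : 2 ≤ t) (l : Fin t → ℕ)
    (h1 : ∀ i : Fin t, a < a * b - l i - 1 ∧ a * b - l i - 1 < a * b - 1 ∧
      ¬ Repre a b (l i) ∧ Repre a b (l i + 1))
    (h2 : ∀ S : Finset (Fin t), 2 ≤ S.card → S.card < t →
      (S.card - 1) * (a * b) < ∑ i ∈ S, l i ∧ (∑ i ∈ S, l i) < S.card * (a * b) ∧
      ¬ Repre a b ((∑ i ∈ S, l i) - (S.card - 1) * (a * b)))
    (h3 : (t - 1) * (a * b) < (∑ i, l i) + 1 ∧ (∑ i, l i) + 1 < t * (a * b) ∧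
      Repre a b ((∑ i, l i) + 1 - (t - 1) * (a * b))) :
    (∀ k : Fin t, IsRep
        (fun U : Finset (Fin (t + b + a)) =>
          a * b ≤ ∑ i ∈ U, Wvec t a b l ⟨0, by omega⟩ i)
        (a * b) (Wvec t a b l k)) ∧
    (∀ (q' : ℕ) (w' : Fin (t + b + a) → ℕ),
      IsRep (fun U : Finset (Fin (t + b + a)) =>
          a * b ≤ ∑ i ∈ U, Wvec t a b l ⟨0, by omega⟩ i) q' w' →
      (∀ i j : Fin (t + b + a), t ≤ (i : ℕ) → (i : ℕ) < t + b →
        t ≤ (j : ℕ) → (j : ℕ) < t + b → w' i = w' j) →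
      (∀ i j : Fin (t + b + a), t + b ≤ (i : ℕ) → t + b ≤ (j : ℕ) → w' i = w' j) →
      (∀ i : Fin (t + b + a), t ≤ (i : ℕ) → (i : ℕ) < t + b → a ≤ w' i) ∧
      (∀ i : Fin (t + b + a), t + b ≤ (i : ℕ) → b ≤ w' i) ∧
      (∀ k : Fin t, a * b - l k - 1 ≤ w' ⟨(k : ℕ), by omega⟩) ∧
      ((∑ k : Fin t, (a * b - l k - 1)) + (t - 1) ≤
        ∑ k : Fin t, w' ⟨(k : ℕ), by omega⟩) ∧
      (∀ k : Fin t, ∑ i, Wvec t a b l k i ≤ ∑ i, w' i)) := by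
  have hl₁ : ∀ j, l j + 1 < a * b := fun j => by have := (h1 j).1; omega
  have hl : ∀ j, l j < a * b := fun j => Nat.lt_of_succ_lt (hl₁ j)
  have hex : ∀ S : Finset (Fin t), S.Nonempty → #S < t →
      ¬ Repre a b (excess (a * b) l S) := by
    intro S hS hSt
    obtain ⟨i, rfl⟩ | hS₂ := hS.exists_eq_singleton_or_nontrivial
    · exact excess_singleton (a * b) l i ▸ (h1 i).2.2.1
    · exact (h2 S (one_lt_card_iff_nontrivial.mpr hS₂) hSt).2.2
  refine ⟨fun k U => le_sum_Wvec_iff hl hex _ k U, fun q w hrep hcA hcB => ?_⟩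
  have ha : 0 < a := Nat.pos_of_mul_pos_right (hl₁ ⟨0, by omega⟩).pos
  have hA : ∀ j, w (memberA j) = w ⟨t, by omega⟩ := forall_memberA_iff.mpr
    fun i hi hi' => hcA i _ hi hi' le_rfl (Nat.lt_add_of_pos_right (by omega))
  have hB : ∀ j, w (memberB j) = w ⟨t + b, by omega⟩ :=
    forall_memberB_iff.mpr fun i hi => hcB i _ hi le_rfl
  have hb : 1 < b := by omega
  obtain ⟨hwA, hwB, -⟩ := le_and_add_le_of_isRep hco hb hrep hA hB
  have hindiv := sum_le_sum_weight_indiv hco hb hl hrep hA hB h3.1 h3.2.1 h3.2.2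
  exact ⟨forall_memberA_iff.mp fun j => (hA j).symm ▸ hwA,
    forall_memberB_iff.mp fun j => (hB j).symm ▸ hwB,
    fun k => le_weight_indiv hco hb hrep hA hB (hl₁ k) (h1 k).2.2.2, hindiv,
    fun k => sum_Wvec_le_sum hl k hA hB hwA hwB hindiv⟩
end

section
/- Let χ be the weighted game on 14 voters represented by [35; 12, 11, 7, 7, 7, 7, 7, 5, 5, 5, 5, 5, 5, 5]. Then χ has exactly three types of voters (the first two voters are equivalent, the next five voters are equivalent, and the last seven voters are equivalent), and χ admits no minimum integer representation. In particular, there exists a weighted game with exactly three types of voters that has no minimum integer representation. -/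
def w14 : Fin 14 → ℕ :=
  fun i => if (i : ℕ) = 0 then 12 else if (i : ℕ) = 1 then 11
    else if (i : ℕ) < 7 then 7 else 5

def chi14 : Finset (Fin 14) → Prop := fun U => 35 ≤ ∑ i ∈ U, w14 i

def cls14 : Fin 14 → ℕ := fun i => if (i : ℕ) < 2 then 0 else if (i : ℕ) < 7 then 1 else 2


/-! Voter 1 can replace voter 0 in every winning coalition: this lowers the weight by one, and a
coalition containing 0 but not 1 weighs exactly 35 only if 23 is a sum of 7s and 5s, which it is
not. Hence voters 0 and 1 are equivalent, and the three weight classes are the types; explicit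
coalitions show that voters of different classes are not equivalent.

A minimum representation is invariant under swapping equivalent voters (the swap is an automorphism
of the game), so it has weights x, a, b on the three types, and comparing with [35; w14] gives
x ≤ 11, a ≤ 7, b ≤ 5. The winning coalitions of all 7-voters and of all 5-voters and the losing
coalition of two 7-voters and four 5-voters force a = 7, b = 5 and a quota of at least 35, so the
winning coalition {0, 1, 2, 7} would need 2x + 12 ≥ 35, i.e. x ≥ 12. -/

open Finset

section Games

variable {n : ℕ} {χ : Finset (Fin n) → Prop}

theorem IsRep.desir_of_le {q : ℕ} {w : Fin n → ℕ} (hrep : IsRep χ q w) {i j : Fin n}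
    (hle : w j ≤ w i) : Desir χ i j := by
  intro U hjU hiU hwin
  rw [hrep, ← add_sum_erase U w hjU] at hwin
  rw [hrep, sum_insert fun h => hiU (mem_of_mem_erase h)]
  omega

theorem IsRep.comp_perm {q : ℕ} {w : Fin n → ℕ} (hrep : IsRep χ q w) {σ : Equiv.Perm (Fin n)}
    (hσ : ∀ U, χ (U.image σ) ↔ χ U) : IsRep χ q (w ∘ σ) := by
  intro U
  rw [← hσ U, hrep, sum_image σ.injective.injOn]
  rfl

theorem VEquiv.symm {i j : Fin n} (h : VEquiv χ i j) : VEquiv χ j i := ⟨h.2, h.1⟩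

theorem Finset.image_swap_of_mem_iff_mem {α : Type*} [DecidableEq α] {U : Finset α} {i j : α}
    (h : i ∈ U ↔ j ∈ U) : U.image (Equiv.swap i j) = U := by
  ext a
  simp only [mem_image]
  grind

theorem Finset.image_swap_of_mem_of_notMem {α : Type*} [DecidableEq α] {U : Finset α} {i j : α}
    (hi : i ∈ U) (hj : j ∉ U) : U.image (Equiv.swap i j) = insert j (U.erase i) := by
  ext a
  simp only [mem_image, mem_insert, mem_erase]
  grind

theorem VEquiv.insert_erase_iff {i j : Fin n} (h : VEquiv χ i j) {U : Finset (Fin n)}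
    (hi : i ∈ U) (hj : j ∉ U) : χ (insert j (U.erase i)) ↔ χ U := by
  refine ⟨fun hV => ?_, h.2 U hi hj⟩
  have hj' : j ∉ U.erase i := fun h' => hj (mem_of_mem_erase h')
  have := h.1 _ (mem_insert_self j _) (by simp [ne_of_mem_of_not_mem hi hj, hi]) hV
  rwa [erase_insert hj', insert_erase hi] at this

theorem VEquiv.image_swap_iff {i j : Fin n} (h : VEquiv χ i j) (U : Finset (Fin n)) :
    χ (U.image (Equiv.swap i j)) ↔ χ U := by
  by_cases hi : i ∈ U <;> by_cases hj : j ∈ U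
  · rw [image_swap_of_mem_iff_mem (iff_of_true hi hj)]
  · rw [image_swap_of_mem_of_notMem hi hj, h.insert_erase_iff hi hj]
  · rw [Equiv.swap_comm, image_swap_of_mem_of_notMem hj hi, h.symm.insert_erase_iff hj hi]
  · rw [image_swap_of_mem_iff_mem (iff_of_false hi hj)]

theorem MinRep.apply_eq_of_vEquiv {q : ℕ} {w : Fin n → ℕ} (hmin : MinRep χ q w) {i j : Fin n}
    (h : VEquiv χ i j) : w i = w j := by
  have hrep := hmin.1.comp_perm h.image_swap_iff
  have hi := hmin.2 q _ hrep i
  have hj := hmin.2 q _ hrep j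
  simp only [Function.comp_apply, Equiv.swap_apply_left, Equiv.swap_apply_right] at hi hj
  omega

theorem numTypes_eq_ncard_range {α : Type*} {c : Fin n → α}
    (hc : ∀ i j, VEquiv χ i j ↔ c i = c j) : NumTypes n χ = (Set.range c).ncard := by
  have hset : {S : Set (Fin n) | ∃ i, S = {j | VEquiv χ i j}} =
      (fun a => {j | a = c j}) '' Set.range c := by
    ext S
    simp only [Set.mem_ofPred_eq, Set.mem_image, Set.mem_range, exists_exists_eq_and, hc]
    exact exists_congr fun i => eq_comm
  rw [NumTypes, hset, Set.InjOn.ncard_image]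
  rintro _ ⟨i, rfl⟩ _ _ hS
  exact ((Set.ext_iff.1 hS i).1 rfl).symm

end Games

instance : DecidablePred chi14 := fun _ => inferInstanceAs (Decidable (35 ≤ _))

def sevens : Finset (Fin 14) := {2, 3, 4, 5, 6}

def fives : Finset (Fin 14) := {7, 8, 9, 10, 11, 12, 13}

theorem sum_eq_of_const_on_sevens_fives (f : Fin 14 → ℕ) (h7 : ∀ i ∈ sevens, f i = f 2)
    (h5 : ∀ i ∈ fives, f i = f 7) (U : Finset (Fin 14)) :
    ∑ i ∈ U, f i = (if 0 ∈ U then f 0 else 0) + (if 1 ∈ U then f 1 else 0) +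
      f 2 * #(U ∩ sevens) + f 7 * #(U ∩ fives) := by
  have hf : ∀ i, f i = (if i = 0 then f 0 else 0) + (if i = 1 then f 1 else 0) +
      (if i ∈ sevens then f 2 else 0) + (if i ∈ fives then f 7 else 0) := by
    intro i
    fin_cases i <;> simp [sevens, fives] <;>
      first | exact h7 _ (by decide) | exact h5 _ (by decide)
  rw [sum_congr rfl fun i _ => hf i]
  simp [sum_add_distrib, sum_ite_mem, mul_comm]

theorem isRep_w14 : IsRep chi14 35 w14 := fun _ => Iff.rfl

theorem sum_w14 (U : Finset (Fin 14)) :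
    ∑ i ∈ U, w14 i = (if 0 ∈ U then 12 else 0) + (if 1 ∈ U then 11 else 0) +
      7 * #(U ∩ sevens) + 5 * #(U ∩ fives) :=
  sum_eq_of_const_on_sevens_fives w14 (by decide) (by decide) U

theorem chi14_desir_one_zero : Desir chi14 1 0 := by
  intro U h0 h1 hwin
  have h1' : 1 ∉ U.erase 0 := fun h => h1 (mem_of_mem_erase h)
  have hne : ∑ i ∈ U.erase 0, w14 i ≠ 23 := by
    rw [sum_w14]
    simp only [notMem_erase, if_false, h1', zero_add]
    omega
  have hU : ∑ i ∈ U, w14 i = 12 + ∑ i ∈ U.erase 0, w14 i := (add_sum_erase U w14 h0).symm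
  have hV : ∑ i ∈ insert 1 (U.erase 0), w14 i = 11 + ∑ i ∈ U.erase 0, w14 i := sum_insert h1'
  unfold chi14 at hwin ⊢
  omega

theorem chi14_desir_of_cls_eq {i j : Fin 14} (h : cls14 i = cls14 j) : Desir chi14 i j := by
  by_cases hij : i = 1 ∧ j = 0
  · obtain ⟨rfl, rfl⟩ := hij
    exact chi14_desir_one_zero
  · exact isRep_w14.desir_of_le (by revert i j; decide)

-- contains `i` but not `j`, and wins with a margin smaller than `w14 i - w14 j`
def witness14 (i j : Fin 14) : Finset (Fin 14) :=
  if cls14 i = 1 then sevens else insert i (if cls14 j = 1 then {7, 8, 9, 10, 11} else {2, 3, 4, 5})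

theorem witness14_spec : ∀ i j : Fin 14, cls14 i < cls14 j →
    i ∈ witness14 i j ∧ j ∉ witness14 i j ∧ chi14 (witness14 i j) ∧
      ¬ chi14 (insert j ((witness14 i j).erase i)) := by
  decide

theorem chi14_not_desir_of_cls_lt {i j : Fin 14} (h : cls14 i < cls14 j) : ¬ Desir chi14 j i := by
  obtain ⟨hi, hj, hwin, hlose⟩ := witness14_spec i j h
  exact fun hd => hlose (hd _ hi hj hwin)

theorem vEquiv_chi14_iff (i j : Fin 14) : VEquiv chi14 i j ↔ cls14 i = cls14 j := by
  refine ⟨fun h => ?_, fun h => ⟨chi14_desir_of_cls_eq h, chi14_desir_of_cls_eq h.symm⟩⟩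
  rcases lt_trichotomy (cls14 i) (cls14 j) with hlt | heq | hgt
  · exact absurd h.2 (chi14_not_desir_of_cls_lt hlt)
  · exact heq
  · exact absurd h.1 (chi14_not_desir_of_cls_lt hgt)

theorem numTypes_chi14 : NumTypes 14 chi14 = 3 := by
  rw [numTypes_eq_ncard_range vEquiv_chi14_iff, ← Set.image_univ, ← coe_univ, ← coe_image,
    Set.ncard_coe_finset]
  rfl

theorem simpleGame_chi14 : SimpleGame 14 chi14 :=
  ⟨fun _ _ hUV hU => hU.trans (sum_le_sum_of_subset hUV), by decide, by decide⟩

theorem not_exists_minRep_chi14 : ¬ ∃ (q : ℕ) (w : Fin 14 → ℕ), MinRep chi14 q w := by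
  rintro ⟨q, w, hmin⟩
  have htype : ∀ i j, cls14 i = cls14 j → w i = w j := fun i j h =>
    hmin.apply_eq_of_vEquiv ((vEquiv_chi14_iff i j).2 h)
  have hsum := sum_eq_of_const_on_sevens_fives w
    (fun i hi => htype i 2 (by revert i; decide)) (fun i hi => htype i 7 (by revert i; decide))
  have h01 : w 0 = w 1 := htype 0 1 rfl
  have hw1 : w 1 ≤ 11 := hmin.2 35 w14 isRep_w14 1
  have hw2 : w 2 ≤ 7 := hmin.2 35 w14 isRep_w14 2
  have hw7 : w 7 ≤ 5 := hmin.2 35 w14 isRep_w14 7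
  have hsevens : q ≤ ∑ i ∈ sevens, w i := (hmin.1 _).1 (by decide)
  have hfives : q ≤ ∑ i ∈ fives, w i := (hmin.1 _).1 (by decide)
  have hwin : q ≤ ∑ i ∈ {0, 1, 2, 7}, w i := (hmin.1 _).1 (by decide)
  have hlose : ¬ q ≤ ∑ i ∈ {2, 3, 7, 8, 9, 10}, w i :=
    fun h => (by decide : ¬ chi14 {2, 3, 7, 8, 9, 10}) ((hmin.1 _).2 h)
  simp [hsum, sevens, fives] at hsevens hfives hwin hlose
  omega

theorem stmt14 :
    NumTypes 14 chi14 = 3 ∧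
    (∀ i j : Fin 14, VEquiv chi14 i j ↔ cls14 i = cls14 j) ∧
    (¬ ∃ (q : ℕ) (w : Fin 14 → ℕ), MinRep chi14 q w) ∧
    ∃ (n : ℕ) (χ : Finset (Fin n) → Prop), SimpleGame n χ ∧ IsWeighted χ ∧
      NumTypes n χ = 3 ∧ ¬ ∃ (q : ℕ) (w : Fin n → ℕ), MinRep χ q w :=
  ⟨numTypes_chi14, vEquiv_chi14_iff, not_exists_minRep_chi14,
    14, chi14, simpleGame_chi14, ⟨35, w14, isRep_w14⟩, numTypes_chi14, not_exists_minRep_chi14⟩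
end
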